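/- arXiv:2207.14262 — 8 statements merged into one kernel-verified Lean document; each statement's English description precedes it below -/
import Mathlib

section
/- Let (Ω,Σ) be a measurable space, and let 𝔭, 𝔮 be probability measures on Ω with 𝔭 ≪ 𝔮 and H := H(𝔭|𝔮) < ∞. Let h : Ω → (0,∞) be measurable and let p, q > 0 be real exponents such that ∫ h^q d𝔮 < ∞ and ∫ h^{−p} d𝔮 < ∞, and assume 0 < 𝔮({h ≥ 1}) < 1. Then log h ∈ L¹(𝔭), and ∫ |log h| d𝔭 ≤ 2·e^{H−1} · max( 1/min(1,p,q), log₂( 𝔮({h ≥ 1})^{1−1/q}·‖h‖_{L^q(𝔮)} + 𝔮({h < 1})^{1−1/p}·‖h^{−1}‖_{L^p(𝔮)} ) ). -/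
/-!
Put `m = min 1 (min p q)` and `u = m |log h|`. Gibbs' variational principle, i.e. the
nonnegativity of the relative entropy of `𝔭` with respect to `𝔮` tilted by `u`, gives
`m ∫ |log h| d𝔭 ≤ H + log ∫ exp u d𝔮`; integrability of `u` under `𝔭` comes from the
pointwise Young inequality `ρ y ≤ ρ log ρ - ρ + exp y` for `ρ = d𝔭/d𝔮`.
On `{h ≥ 1}` we have `exp u = (h^q)^(m/q)` and on `{h < 1}` it is `(h^(-p))^(m/p)`, so Jensen's
inequality for the concave powers bounds the two pieces by `a^(1-m) A^m` and `b^(1-m) B^m`,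
where `a + b = 1` are the masses of the two sets and `A`, `B` are the two terms of the sum in the
statement; by concavity of `t ↦ t^m` the sum is at most `(A + B)^m`. Finally
`H/m + log (A + B) ≤ max (1/m) (log₂ (A + B)) * (H + log 2)` and `H + log 2 ≤ 2 exp (H - 1)`.
-/

open MeasureTheory Real

namespace Real

lemma mul_le_mul_log_sub_add_exp {r : ℝ} (hr : 0 ≤ r) (y : ℝ) :
    r * y ≤ r * log r - r + exp y := by
  rcases hr.eq_or_lt with rfl | hr
  · simpa using (exp_pos y).le
  have h := mul_le_mul_of_nonneg_left (add_one_le_exp (y - log r)) hr.le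
  rw [exp_sub, exp_log hr, mul_div_cancel₀ _ hr.ne'] at h
  linarith

lemma rpow_mul_rpow_add_rpow_mul_rpow_le {a b A B θ : ℝ} (ha : 0 < a) (hb : 0 < b)
    (hab : a + b = 1) (hA : 0 ≤ A) (hB : 0 ≤ B) (hθ₀ : 0 ≤ θ) (hθ₁ : θ ≤ 1) :
    a ^ (1 - θ) * A ^ θ + b ^ (1 - θ) * B ^ θ ≤ (A + B) ^ θ := by
  have h_scale : ∀ {c C : ℝ}, 0 < c → 0 ≤ C → c ^ (1 - θ) * C ^ θ = c * (C / c) ^ θ := by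
    intro c C hc hC
    rw [div_rpow hC hc.le, rpow_sub hc, rpow_one]
    field_simp
  have h := (concaveOn_rpow hθ₀ hθ₁).2 (Set.mem_Ici.2 (div_nonneg hA ha.le))
    (Set.mem_Ici.2 (div_nonneg hB hb.le)) ha.le hb.le hab
  simp only [smul_eq_mul, mul_div_cancel₀ _ ha.ne', mul_div_cancel₀ _ hb.ne'] at h
  rwa [h_scale ha hA, h_scale hb hB]

lemma exp_mul_abs_log_of_one_le {x : ℝ} (hx : 1 ≤ x) (m : ℝ) :
    exp (m * |log x|) = x ^ m := by
  rw [abs_of_nonneg (log_nonneg hx), rpow_def_of_pos (by linarith), mul_comm]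

lemma exp_mul_abs_log_of_lt_one {x : ℝ} (hx₀ : 0 < x) (hx₁ : x < 1) (m : ℝ) :
    exp (m * |log x|) = x ^ (-m) := by
  rw [abs_of_nonpos (log_nonpos hx₀.le hx₁.le), rpow_def_of_pos hx₀]
  ring_nf

lemma exp_mul_abs_log_le_rpow_add_rpow {x m p q : ℝ} (hx : 0 < x) (hmp : m ≤ p) (hmq : m ≤ q) :
    exp (m * |log x|) ≤ x ^ q + x ^ (-p) := by
  rcases le_or_gt 1 x with hx₁ | hx₁
  · rw [exp_mul_abs_log_of_one_le hx₁]
    linarith [rpow_le_rpow_of_exponent_le hx₁ hmq, rpow_nonneg hx.le (-p)]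
  · rw [exp_mul_abs_log_of_lt_one hx hx₁]
    linarith [rpow_le_rpow_of_exponent_ge hx hx₁.le (neg_le_neg hmp), rpow_nonneg hx.le q]

lemma log_le_mul_log_of_le_rpow {x y m : ℝ} (hx : 0 < x) (hy : 0 ≤ y) (hm : m ≠ 0)
    (h : x ≤ y ^ m) : log x ≤ m * log y := by
  rcases hy.eq_or_lt with rfl | hy
  · rw [zero_rpow hm] at h
    linarith
  · rw [← log_rpow hy]
    exact log_le_log hx h

lemma le_two_mul_exp_sub_one_mul_max {I H m S : ℝ} (hH : 0 ≤ H) (hm : 0 < m)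
    (hI : m * I ≤ H + m * log S) :
    I ≤ 2 * exp (H - 1) * max (1 / m) (logb 2 S) := by
  set M := max (1 / m) (logb 2 S)
  have hmM : 1 ≤ m * M := by
    have := mul_le_mul_of_nonneg_left (le_max_left (1 / m) (logb 2 S)) hm.le
    rwa [mul_one_div_cancel hm.ne'] at this
  have hM : 0 < M := lt_of_lt_of_le (by positivity) (le_max_left _ _)
  have hlogS : log S ≤ log 2 * M := by
    have : log S = log 2 * logb 2 S := by
      rw [← log_div_log, mul_div_cancel₀ _ (log_pos one_lt_two).ne']
    exact this ▸ mul_le_mul_of_nonneg_left (le_max_right _ _) (log_nonneg one_le_two)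
  have hexp : H + log 2 ≤ 2 * exp (H - 1) := by
    have := add_one_le_exp (H - 1 + log 2)
    rw [exp_add, exp_log two_pos] at this
    linarith
  have : m * I ≤ m * (M * (H + log 2)) := by nlinarith [log_nonneg one_le_two]
  calc I ≤ M * (H + log 2) := le_of_mul_le_mul_left this hm
    _ ≤ M * (2 * exp (H - 1)) := mul_le_mul_of_nonneg_left hexp hM.le
    _ = 2 * exp (H - 1) * M := mul_comm _ _

end Real

namespace MeasureTheory

variable {α : Type*} [MeasurableSpace α]

lemma integrable_of_integrable_exp_of_integrable_llr {μ ν : Measure α} [IsFiniteMeasure μ]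
    [SigmaFinite ν] (hμν : μ ≪ ν) (h_int : Integrable (llr μ ν) μ) {f : α → ℝ}
    (hf : Measurable f) (hf₀ : ∀ x, 0 ≤ f x) (hexp : Integrable (fun x ↦ exp (f x)) ν) :
    Integrable f μ := by
  rw [← integrable_toReal_rnDeriv_mul_iff hμν]
  have hbound : Integrable (fun x ↦ (μ.rnDeriv ν x).toReal * log (μ.rnDeriv ν x).toReal
      - (μ.rnDeriv ν x).toReal + exp (f x)) ν :=
    (((integrable_rnDeriv_mul_log_iff hμν).2 h_int).sub Measure.integrable_toReal_rnDeriv).add hexp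
  refine hbound.mono' ((Measure.measurable_rnDeriv μ ν).ennreal_toReal.mul hf).aestronglyMeasurable
    (Filter.Eventually.of_forall fun x ↦ ?_)
  rw [norm_of_nonneg (mul_nonneg ENNReal.toReal_nonneg (hf₀ x))]
  exact mul_le_mul_log_sub_add_exp ENNReal.toReal_nonneg (f x)

lemma integral_le_integral_llr_add_log_integral_exp {μ ν : Measure α} [IsProbabilityMeasure μ]
    [IsProbabilityMeasure ν] (hμν : μ ≪ ν) (h_int : Integrable (llr μ ν) μ) {f : α → ℝ}
    (hfμ : Integrable f μ) (hfν : Integrable (fun x ↦ exp (f x)) ν) :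
    ∫ x, f x ∂μ ≤ ∫ x, llr μ ν x ∂μ + log (∫ x, exp (f x) ∂ν) := by
  have := isProbabilityMeasure_tilted hfν
  have h := InformationTheory.integral_llr_add_sub_measure_univ_nonneg
    (hμν.trans (absolutelyContinuous_tilted hfν)) (integrable_llr_tilted_right hμν hfμ h_int hfν)
  rw [integral_llr_tilted_right hμν hfμ hfν h_int] at h
  simp only [probReal_univ] at h
  linarith

lemma setIntegral_rpow_le_of_le_one {μ : Measure α} [IsFiniteMeasure μ] {s : Set α}
    (hs : μ s ≠ 0) {G : α → ℝ} (hG₀ : ∀ x, 0 ≤ G x) (hG : IntegrableOn G s μ) {k : ℝ} (hk₀ : 0 ≤ k)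
    (hk₁ : k ≤ 1) :
    ∫ x in s, G x ^ k ∂μ ≤ μ.real s ^ (1 - k) * (∫ x in s, G x ∂μ) ^ k := by
  have ha : 0 < μ.real s := ENNReal.toReal_pos hs (measure_ne_top μ s)
  have hGk : IntegrableOn (fun x ↦ G x ^ k) s μ := by
    refine (hG.add (integrableOn_const (measure_ne_top μ s) (C := (1 : ℝ)))).mono'
      (hG.aestronglyMeasurable.aemeasurable.pow_const k).aestronglyMeasurable
      (Filter.Eventually.of_forall fun x ↦ ?_)
    rw [norm_of_nonneg (rpow_nonneg (hG₀ x) k), Pi.add_apply]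
    rcases le_or_gt (G x) 1 with hx | hx
    · linarith [rpow_le_one (hG₀ x) hx hk₀, hG₀ x]
    · have := rpow_le_rpow_of_exponent_le hx.le hk₁
      rw [rpow_one] at this
      linarith
  have hJensen := (concaveOn_rpow hk₀ hk₁).le_map_set_average
    (continuous_rpow_const hk₀).continuousOn isClosed_Ici hs (measure_ne_top μ s)
    (Filter.Eventually.of_forall fun x ↦ Set.mem_Ici.2 (hG₀ x)) hG hGk
  have hX : 0 ≤ ∫ x in s, G x ∂μ := setIntegral_nonneg_of_ae_restrict (.of_forall hG₀)
  rw [setAverage_eq, setAverage_eq, smul_eq_mul, smul_eq_mul, mul_rpow (inv_nonneg.2 ha.le) hX,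
    inv_rpow ha.le, inv_mul_le_iff₀ ha, ← mul_assoc] at hJensen
  rwa [rpow_sub ha, rpow_one, div_eq_mul_inv]

lemma setIntegral_rpow_div_le {μ : Measure α} [IsFiniteMeasure μ] {s : Set α} (hs : μ s ≠ 0)
    {G : α → ℝ} (hG₀ : ∀ x, 0 ≤ G x) (hG : Integrable G μ) {θ r : ℝ} (hθ : 0 < θ)
    (hθr : θ ≤ r) :
    ∫ x in s, G x ^ (θ / r) ∂μ ≤
      μ.real s ^ (1 - θ) * (μ.real s ^ (1 - 1 / r) * (∫ x, G x ∂μ) ^ (1 / r)) ^ θ := by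
  have hr : 0 < r := hθ.trans_le hθr
  have ha : 0 < μ.real s := ENNReal.toReal_pos hs (measure_ne_top μ s)
  have hQ : 0 ≤ ∫ x, G x ∂μ := integral_nonneg hG₀
  calc ∫ x in s, G x ^ (θ / r) ∂μ
      ≤ μ.real s ^ (1 - θ / r) * (∫ x in s, G x ∂μ) ^ (θ / r) :=
        setIntegral_rpow_le_of_le_one hs hG₀ hG.integrableOn (by positivity)
          ((div_le_one hr).2 hθr)
    _ ≤ μ.real s ^ (1 - θ / r) * (∫ x, G x ∂μ) ^ (θ / r) := by
        gcongr ?_ * ?_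
        exact rpow_le_rpow (setIntegral_nonneg_of_ae_restrict (.of_forall hG₀))
          (setIntegral_le_integral hG (.of_forall hG₀)) (by positivity)
    _ = μ.real s ^ (1 - θ) * (μ.real s ^ (1 - 1 / r) * (∫ x, G x ∂μ) ^ (1 / r)) ^ θ := by
        rw [mul_rpow (by positivity) (by positivity), ← rpow_mul ha.le, ← rpow_mul hQ,
          ← mul_assoc, ← rpow_add ha]
        congr 2
        · field_simp
          ring
        · field_simp

lemma integrable_exp_mul_abs_log {μ : Measure α} {h : α → ℝ} (hmeas : Measurable h)
    (hpos : ∀ x, 0 < h x) {m p q : ℝ} (hmp : m ≤ p) (hmq : m ≤ q)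
    (hhq : Integrable (fun x ↦ h x ^ q) μ) (hhp : Integrable (fun x ↦ h x ^ (-p)) μ) :
    Integrable (fun x ↦ exp (m * |log (h x)|)) μ :=
  (hhq.add hhp).mono' (by fun_prop : Measurable _).aestronglyMeasurable
    (.of_forall fun x ↦ by
      rw [norm_of_nonneg (exp_pos _).le]
      exact exp_mul_abs_log_le_rpow_add_rpow (hpos x) hmp hmq)

lemma log_integral_exp_mul_abs_log_le {μ : Measure α} [IsProbabilityMeasure μ] {h : α → ℝ}
    (hmeas : Measurable h) (hpos : ∀ x, 0 < h x) {m p q : ℝ} (hm₀ : 0 < m) (hm₁ : m ≤ 1)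
    (hmp : m ≤ p) (hmq : m ≤ q)
    (hhq : Integrable (fun x ↦ h x ^ q) μ) (hhp : Integrable (fun x ↦ h x ^ (-p)) μ)
    (hs₀ : 0 < μ {x | 1 ≤ h x}) (hs₁ : μ {x | 1 ≤ h x} < 1) :
    log (∫ x, exp (m * |log (h x)|) ∂μ) ≤
      m * log (μ.real {x | 1 ≤ h x} ^ (1 - 1 / q) * (∫ x, h x ^ q ∂μ) ^ (1 / q)
        + μ.real {x | h x < 1} ^ (1 - 1 / p) * (∫ x, h x ^ (-p) ∂μ) ^ (1 / p)) := by
  set s := {x | 1 ≤ h x}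
  have hs : MeasurableSet s := measurableSet_le measurable_const hmeas
  have hsc : {x | h x < 1} = sᶜ := by ext; simp [s]
  have hsc₀ : μ sᶜ ≠ 0 := by
    rw [prob_compl_eq_one_sub hs]
    exact (tsub_pos_of_lt hs₁).ne'
  have hq : q ≠ 0 := (hm₀.trans_le hmq).ne'
  have hp : p ≠ 0 := (hm₀.trans_le hmp).ne'
  have hon_s : ∫ x in s, exp (m * |log (h x)|) ∂μ = ∫ x in s, (h x ^ q) ^ (m / q) ∂μ :=
    setIntegral_congr_fun hs fun x hx ↦ by
      rw [exp_mul_abs_log_of_one_le hx, ← rpow_mul (hpos x).le, mul_div_cancel₀ _ hq]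
  have hon_sc : ∫ x in sᶜ, exp (m * |log (h x)|) ∂μ = ∫ x in sᶜ, (h x ^ (-p)) ^ (m / p) ∂μ :=
    setIntegral_congr_fun hs.compl fun x hx ↦ by
      rw [exp_mul_abs_log_of_lt_one (hpos x) (not_le.1 hx), ← rpow_mul (hpos x).le]
      congr 1
      field_simp
  have hhq₀ : ∀ x, 0 ≤ h x ^ q := fun x ↦ rpow_nonneg (hpos x).le q
  have hhp₀ : ∀ x, 0 ≤ h x ^ (-p) := fun x ↦ rpow_nonneg (hpos x).le (-p)
  have hA : 0 ≤ μ.real s ^ (1 - 1 / q) * (∫ x, h x ^ q ∂μ) ^ (1 / q) :=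
    mul_nonneg (rpow_nonneg measureReal_nonneg _) (rpow_nonneg (integral_nonneg hhq₀) _)
  have hB : 0 ≤ μ.real sᶜ ^ (1 - 1 / p) * (∫ x, h x ^ (-p) ∂μ) ^ (1 / p) :=
    mul_nonneg (rpow_nonneg measureReal_nonneg _) (rpow_nonneg (integral_nonneg hhp₀) _)
  have hexp := integrable_exp_mul_abs_log hmeas hpos hmp hmq hhq hhp
  rw [hsc]
  refine log_le_mul_log_of_le_rpow (integral_exp_pos hexp) (add_nonneg hA hB) hm₀.ne' ?_
  rw [← integral_add_compl hs hexp, hon_s, hon_sc]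
  calc _ ≤ _ := add_le_add (setIntegral_rpow_div_le hs₀.ne' hhq₀ hhq hm₀ hmq)
        (setIntegral_rpow_div_le hsc₀ hhp₀ hhp hm₀ hmp)
    _ ≤ _ := rpow_mul_rpow_add_rpow_mul_rpow_le
        (ENNReal.toReal_pos hs₀.ne' (measure_ne_top μ s))
        (ENNReal.toReal_pos hsc₀ (measure_ne_top μ sᶜ))
        (by rw [measureReal_add_measureReal_compl hs, probReal_univ]) hA hB hm₀.le hm₁

end MeasureTheory

/-- Lemma on log-integrability, eq. (bound:L1).
If `𝔭 ≪ 𝔮` are probability measures with finite relative entropy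
`H = ∫ log (d𝔭/d𝔮) d𝔭`, `h` is a positive measurable function with
`h ∈ L^q(𝔮)` and `h⁻¹ ∈ L^p(𝔮)` for some `p, q > 0`, and
`0 < 𝔮({h ≥ 1}) < 1`, then `log h ∈ L¹(𝔭)` with the explicit bound. -/
theorem log_integrability_bound
    {Ω : Type*} [MeasurableSpace Ω]
    (𝔭 𝔮 : Measure Ω) [IsProbabilityMeasure 𝔭] [IsProbabilityMeasure 𝔮]
    (hac : 𝔭 ≪ 𝔮)
    (hH : Integrable (fun x => Real.log ((𝔭.rnDeriv 𝔮 x).toReal)) 𝔭)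
    (h : Ω → ℝ) (hmeas : Measurable h) (hpos : ∀ x, 0 < h x)
    (p q : ℝ) (hp : 0 < p) (hq : 0 < q)
    (hhq : Integrable (fun x => h x ^ q) 𝔮)
    (hhp : Integrable (fun x => h x ^ (-p)) 𝔮)
    (hP0 : 0 < 𝔮 {x | 1 ≤ h x}) (hP1 : 𝔮 {x | 1 ≤ h x} < 1) :
    Integrable (fun x => Real.log (h x)) 𝔭 ∧
    ∫ x, |Real.log (h x)| ∂𝔭 ≤
      2 * Real.exp ((∫ x, Real.log ((𝔭.rnDeriv 𝔮 x).toReal) ∂𝔭) - 1) *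
        max (1 / min 1 (min p q))
          (Real.logb 2
            ((𝔮 {x | 1 ≤ h x}).toReal ^ (1 - 1 / q) * (∫ x, h x ^ q ∂𝔮) ^ (1 / q)
              + (𝔮 {x | h x < 1}).toReal ^ (1 - 1 / p) * (∫ x, h x ^ (-p) ∂𝔮) ^ (1 / p))) := by
  set m := min 1 (min p q)
  have hm₀ : 0 < m := lt_min one_pos (lt_min hp hq)
  have hmp : m ≤ p := (min_le_right _ _).trans (min_le_left _ _)
  have hmq : m ≤ q := (min_le_right _ _).trans (min_le_right _ _)
  have hexp := integrable_exp_mul_abs_log hmeas hpos hmp hmq hhq hhp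
  have hmu : Integrable (fun x ↦ m * |log (h x)|) 𝔭 :=
    integrable_of_integrable_exp_of_integrable_llr hac hH (by fun_prop)
      (fun x ↦ by positivity) hexp
  have habs : Integrable (fun x ↦ |log (h x)|) 𝔭 := by
    simpa [hm₀.ne'] using hmu.const_mul m⁻¹
  refine ⟨(integrable_norm_iff hmeas.log.aestronglyMeasurable).1 habs, ?_⟩
  have hgibbs := integral_le_integral_llr_add_log_integral_exp hac hH hmu hexp
  have hH₀ : 0 ≤ ∫ x, llr 𝔭 𝔮 x ∂𝔭 := by
    simpa using InformationTheory.integral_llr_add_sub_measure_univ_nonneg hac hH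
  refine le_two_mul_exp_sub_one_mul_max hH₀ hm₀ ?_
  rw [integral_const_mul] at hgibbs
  exact hgibbs.trans (add_le_add_right
    (log_integral_exp_mul_abs_log_le hmeas hpos hm₀ (min_le_left _ _) hmp hmq hhq hhp hP0 hP1) _)
end

section
/- Let (Ω,Σ) be a measurable space, and let 𝔭, 𝔮 be probability measures on Ω with 𝔭 ≪ 𝔮 and H := H(𝔭|𝔮) < ∞. Let h : Ω → (0,∞) be measurable and let p, q > 0 be real exponents such that ∫ h^q d𝔮 < ∞ and ∫ h^{−p} d𝔮 < ∞. Then log h ∈ L¹(𝔭), and ∫ |log h| d𝔭 ≤ (2·e^{H−1}/min(p,q)) · max( 1, log₂( ‖h‖_{L^q(𝔮)}^{min(p,q)} + ‖h^{−1}‖_{L^p(𝔮)}^{min(p,q)} ) ). -/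
/-! Put `r = min p q` and `g = r |log h|`, so that `exp g ≤ h ^ r + h⁻¹ ^ r`. Integrating Young's
inequality `s t ≤ s log s - s + exp t` with `s = d𝔭/d𝔮` against `𝔮` gives the entropy inequality
`∫ g d𝔭 ≤ H + log ∫ exp g d𝔮`, which yields both the integrability of `log h` and
`r ∫ |log h| d𝔭 ≤ H + log S` with `S = ‖h‖_q ^ r + ‖h⁻¹‖_p ^ r`, by Lyapunov's inequality
`‖u‖_r ≤ ‖u‖_s` for `r ≤ s`. Since `H ≥ 0` (Gibbs) and `H + log 2 ≤ 2 exp (H - 1)`, we get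
`H + log S ≤ (H + log 2) max 1 (log₂ S) ≤ 2 exp (H - 1) max 1 (log₂ S)`. -/

open MeasureTheory Real

theorem Real.mul_le_mul_log_sub_add_exp_s1 {s : ℝ} (hs : 0 ≤ s) (t : ℝ) :
    s * t ≤ s * log s - s + exp t := by
  rcases hs.eq_or_lt with rfl | hs
  · simpa using (exp_pos t).le
  · have h := mul_le_mul_of_nonneg_left (add_one_le_exp (t - log s)) hs.le
    rw [exp_sub, exp_log hs, mul_div_cancel₀ _ hs.ne'] at h
    linarith

theorem Real.exp_mul_abs_log_le_rpow_add_rpow_s1 {x : ℝ} (hx : 0 < x) (r : ℝ) :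
    exp (r * |log x|) ≤ x ^ r + x⁻¹ ^ r := by
  rw [inv_rpow hx.le, ← rpow_neg hx.le, rpow_def_of_pos hx, rpow_def_of_pos hx]
  rcases le_total 0 (log x) with hl | hl
  · rw [abs_of_nonneg hl, mul_comm]
    linarith [exp_pos (log x * -r)]
  · rw [abs_of_nonpos hl, show r * -log x = log x * -r by ring]
    linarith [exp_pos (log x * r)]

theorem Real.add_log_le_two_mul_exp_sub_one_mul_max_logb {H : ℝ} (hH : 0 ≤ H) (S : ℝ) :
    H + log S ≤ 2 * exp (H - 1) * max 1 (logb 2 S) := by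
  have hlog2 : 0 < log 2 := log_pos one_lt_two
  have hM : 1 ≤ max 1 (logb 2 S) := le_max_left _ _
  have hexp : H + log 2 ≤ 2 * exp (H - 1) := by
    have := add_one_le_exp (H - 1 + log 2)
    rw [exp_add, exp_log two_pos] at this
    linarith
  have hlogS : log S ≤ log 2 * max 1 (logb 2 S) := by
    calc log S = log 2 * logb 2 S := by rw [← log_div_log, mul_div_cancel₀ _ hlog2.ne']
      _ ≤ log 2 * max 1 (logb 2 S) := by gcongr; exact le_max_right _ _
  calc H + log S ≤ (H + log 2) * max 1 (logb 2 S) := by nlinarith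
    _ ≤ 2 * exp (H - 1) * max 1 (logb 2 S) := by gcongr

theorem Real.rpow_le_one_add_rpow {x r s : ℝ} (hx : 0 ≤ x) (hr : 0 ≤ r) (hrs : r ≤ s) :
    x ^ r ≤ 1 + x ^ s := by
  rcases le_total x 1 with h1 | h1
  · linarith [rpow_le_one hx h1 hr, rpow_nonneg hx s]
  · linarith [rpow_le_rpow_of_exponent_le h1 hrs]

section Lyapunov

variable {α : Type*} [MeasurableSpace α] {μ : Measure α} {u : α → ℝ} {r s : ℝ}

theorem integrable_rpow_of_exponent_le [IsFiniteMeasure μ] (hu : AEMeasurable u μ)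
    (hu0 : ∀ x, 0 ≤ u x) (hr : 0 ≤ r) (hrs : r ≤ s) (hint : Integrable (fun x => u x ^ s) μ) :
    Integrable (fun x => u x ^ r) μ :=
  ((integrable_const 1).add hint).mono' (hu.pow_const r).aestronglyMeasurable
    (.of_forall fun x => by
      rw [norm_of_nonneg (rpow_nonneg (hu0 x) r)]
      exact rpow_le_one_add_rpow (hu0 x) hr hrs)

theorem integral_rpow_le_of_exponent_le [IsProbabilityMeasure μ] (hu : AEMeasurable u μ)
    (hu0 : ∀ x, 0 ≤ u x) (hr : 0 < r) (hrs : r ≤ s) (hint : Integrable (fun x => u x ^ s) μ) :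
    ∫ x, u x ^ r ∂μ ≤ ((∫ x, u x ^ s ∂μ) ^ (1 / s)) ^ r := by
  have hs : 0 < s := hr.trans_le hrs
  have hpow : ∀ x, (u x ^ r) ^ (s / r) = u x ^ s := fun x => by
    rw [← rpow_mul (hu0 x), mul_div_cancel₀ _ hr.ne']
  have jensen : (∫ x, u x ^ r ∂μ) ^ (s / r) ≤ ∫ x, u x ^ s ∂μ := by
    simpa only [hpow] using (convexOn_rpow ((one_le_div hr).2 hrs)).map_integral_le
      (continuousOn_id.rpow_const fun _ _ => Or.inr (div_pos hs hr).le) isClosed_Ici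
      (.of_forall fun x => rpow_nonneg (hu0 x) r)
      (integrable_rpow_of_exponent_le hu hu0 hr.le hrs hint)
      (by simpa only [Function.comp_def, hpow] using hint)
  have hI : 0 ≤ ∫ x, u x ^ r ∂μ := integral_nonneg fun x => rpow_nonneg (hu0 x) r
  calc ∫ x, u x ^ r ∂μ = ((∫ x, u x ^ r ∂μ) ^ (s / r)) ^ (1 / s * r) := by
        rw [← rpow_mul hI]; field_simp; simp
    _ ≤ (∫ x, u x ^ s ∂μ) ^ (1 / s * r) := by gcongr
    _ = ((∫ x, u x ^ s ∂μ) ^ (1 / s)) ^ r :=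
      rpow_mul (integral_nonneg fun x => rpow_nonneg (hu0 x) s) _ _

theorem integrable_exp_mul_abs_log_and_integral_le [IsProbabilityMeasure μ] {h : α → ℝ}
    (hh : Measurable h) (hpos : ∀ x, 0 < h x) {p q : ℝ} (hp : 0 < p) (hq : 0 < q)
    (hhq : Integrable (fun x => h x ^ q) μ) (hhp : Integrable (fun x => (h x)⁻¹ ^ p) μ) :
    Integrable (fun x => exp (min p q * |log (h x)|)) μ ∧
      ∫ x, exp (min p q * |log (h x)|) ∂μ ≤
        ((∫ x, h x ^ q ∂μ) ^ (1 / q)) ^ min p q + ((∫ x, (h x)⁻¹ ^ p ∂μ) ^ (1 / p)) ^ min p q := by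
  have hr : 0 < min p q := lt_min hp hq
  have hh0 : ∀ x, 0 ≤ h x := fun x => (hpos x).le
  have hhinv0 : ∀ x, 0 ≤ (h x)⁻¹ := fun x => inv_nonneg.2 (hh0 x)
  have hhr := integrable_rpow_of_exponent_le hh.aemeasurable hh0 hr.le (min_le_right p q) hhq
  have hhinvr :=
    integrable_rpow_of_exponent_le hh.inv.aemeasurable hhinv0 hr.le (min_le_left p q) hhp
  have hexp_le x := exp_mul_abs_log_le_rpow_add_rpow_s1 (hpos x) (min p q)
  have hexp : Integrable (fun x => exp (min p q * |log (h x)|)) μ :=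
    (hhr.add hhinvr).mono' (hh.log.abs.const_mul _).exp.aestronglyMeasurable
      (.of_forall fun x => by rw [norm_of_nonneg (exp_pos _).le]; exact hexp_le x)
  refine ⟨hexp, ?_⟩
  calc ∫ x, exp (min p q * |log (h x)|) ∂μ
      ≤ ∫ x, h x ^ min p q + (h x)⁻¹ ^ min p q ∂μ := integral_mono hexp (hhr.add hhinvr) hexp_le
    _ = ∫ x, h x ^ min p q ∂μ + ∫ x, (h x)⁻¹ ^ min p q ∂μ := integral_add hhr hhinvr
    _ ≤ _ := add_le_add
      (integral_rpow_le_of_exponent_le hh.aemeasurable hh0 hr (min_le_right p q) hhq)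
      (integral_rpow_le_of_exponent_le hh.inv.aemeasurable hhinv0 hr (min_le_left p q) hhp)

end Lyapunov

section Entropy

variable {α : Type*} [MeasurableSpace α] {μ ν : Measure α}

theorem integral_llr_nonneg [IsProbabilityMeasure μ] [IsProbabilityMeasure ν] (hμν : μ ≪ ν)
    (h_int : Integrable (llr μ ν) μ) : 0 ≤ ∫ x, llr μ ν x ∂μ := by
  simpa using InformationTheory.integral_llr_add_sub_measure_univ_nonneg hμν h_int

theorem integrable_and_integral_le_llr_add_log_integral_exp [IsProbabilityMeasure μ]
    [SigmaFinite ν] (hμν : μ ≪ ν) (h_int : Integrable (llr μ ν) μ) {g : α → ℝ}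
    (hg : Measurable g) (hg0 : ∀ x, 0 ≤ g x) (hexp : Integrable (fun x => exp (g x)) ν) :
    Integrable g μ ∧ ∫ x, g x ∂μ ≤ ∫ x, llr μ ν x ∂μ + log (∫ x, exp (g x) ∂ν) := by
  have : NeZero ν := ⟨fun hν => by simpa [hν] using @hμν Set.univ⟩
  set K := ∫ x, exp (g x) ∂ν
  have hK : 0 < K := integral_exp_pos hexp
  set ρ : α → ℝ := fun x => (μ.rnDeriv ν x).toReal
  set F : α → ℝ := fun x => llr μ ν x + log K - 1
  have young : ∀ x, ρ x • g x ≤ ρ x • F x + exp (g x) / K := fun x => by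
    have := mul_le_mul_log_sub_add_exp_s1 (s := ρ x) ENNReal.toReal_nonneg (g x - log K)
    rw [exp_sub, exp_log hK] at this
    simp only [smul_eq_mul, F, llr]
    linarith
  have hlogK : Integrable (fun x => llr μ ν x + log K) μ := h_int.add (integrable_const _)
  have hρF : Integrable (fun x => ρ x • F x) ν :=
    (integrable_rnDeriv_smul_iff hμν).2 (hlogK.sub (integrable_const _))
  have hρg : Integrable (fun x => ρ x • g x) ν :=
    (hρF.add (hexp.div_const K)).mono'
      ((Measure.measurable_rnDeriv μ ν).ennreal_toReal.mul hg).aestronglyMeasurable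
      (.of_forall fun x => by
        rw [smul_eq_mul, norm_of_nonneg (mul_nonneg ENNReal.toReal_nonneg (hg0 x))]
        exact young x)
  refine ⟨(integrable_rnDeriv_smul_iff hμν).1 hρg, ?_⟩
  calc ∫ x, g x ∂μ = ∫ x, ρ x • g x ∂ν := (integral_rnDeriv_smul hμν).symm
    _ ≤ ∫ x, ρ x • F x + exp (g x) / K ∂ν := integral_mono hρg (hρF.add (hexp.div_const K)) young
    _ = ∫ x, llr μ ν x ∂μ + log K := by
      rw [integral_add hρF (hexp.div_const K), integral_rnDeriv_smul hμν, integral_div,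
        div_self hK.ne']
      simp only [F]
      rw [integral_sub hlogK (integrable_const _),
        integral_add h_int (integrable_const _)]
      simp

end Entropy

/-- Lemma on log-integrability, eq. (bound:L1:no:measure).
If `𝔭 ≪ 𝔮` are probability measures with finite relative entropy
`H = ∫ log (d𝔭/d𝔮) d𝔭`, `h` is a positive measurable function with
`h ∈ L^q(𝔮)` and `h⁻¹ ∈ L^p(𝔮)` for some `p, q > 0`, then `log h ∈ L¹(𝔭)` with
`∫ |log h| d𝔭 ≤ (2 e^{H-1} / min(p,q)) · max(1, log₂(‖h‖_q^{min(p,q)} + ‖h⁻¹‖_p^{min(p,q)}))`. -/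
theorem log_integrability_bound_no_measure
    {Ω : Type*} [MeasurableSpace Ω]
    (𝔭 𝔮 : Measure Ω) [IsProbabilityMeasure 𝔭] [IsProbabilityMeasure 𝔮]
    (hac : 𝔭 ≪ 𝔮)
    (hH : Integrable (fun x => Real.log ((𝔭.rnDeriv 𝔮 x).toReal)) 𝔭)
    (h : Ω → ℝ) (hmeas : Measurable h) (hpos : ∀ x, 0 < h x)
    (p q : ℝ) (hp : 0 < p) (hq : 0 < q)
    (hhq : Integrable (fun x => h x ^ q) 𝔮)
    (hhp : Integrable (fun x => h x ^ (-p)) 𝔮) :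
    Integrable (fun x => Real.log (h x)) 𝔭 ∧
    ∫ x, |Real.log (h x)| ∂𝔭 ≤
      2 * Real.exp ((∫ x, Real.log ((𝔭.rnDeriv 𝔮 x).toReal) ∂𝔭) - 1) / min p q *
        max 1
          (Real.logb 2
            (((∫ x, h x ^ q ∂𝔮) ^ (1 / q)) ^ min p q
              + ((∫ x, h x ^ (-p) ∂𝔮) ^ (1 / p)) ^ min p q)) := by
  set r := min p q
  have hr : 0 < r := lt_min hp hq
  have hinv : ∀ x, h x ^ (-p) = (h x)⁻¹ ^ p := fun x => by
    rw [inv_rpow (hpos x).le, rpow_neg (hpos x).le]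
  simp only [hinv] at hhp ⊢
  obtain ⟨hexp, hKS⟩ := integrable_exp_mul_abs_log_and_integral_le hmeas hpos hp hq hhq hhp
  obtain ⟨hint, hDV⟩ := integrable_and_integral_le_llr_add_log_integral_exp hac hH
    (hmeas.log.abs.const_mul r) (fun x => by positivity) hexp
  set S := ((∫ x, h x ^ q ∂𝔮) ^ (1 / q)) ^ r + ((∫ x, (h x)⁻¹ ^ p ∂𝔮) ^ (1 / p)) ^ r
  set H := ∫ x, log ((𝔭.rnDeriv 𝔮 x).toReal) ∂𝔭
  have hlog : ∫ x, |log (h x)| ∂𝔭 ≤ (H + log S) / r := by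
    rw [le_div_iff₀ hr, mul_comm, ← integral_const_mul]
    exact hDV.trans (add_le_add le_rfl (log_le_log (integral_exp_pos hexp) hKS))
  refine ⟨(hint.const_mul r⁻¹).mono' hmeas.log.aestronglyMeasurable
    (.of_forall fun x => by simp [hr.ne']), ?_⟩
  calc ∫ x, |log (h x)| ∂𝔭 ≤ (H + log S) / r := hlog
    _ ≤ 2 * exp (H - 1) * max 1 (logb 2 S) / r := by
      gcongr
      exact add_log_le_two_mul_exp_sub_one_mul_max_logb (integral_llr_nonneg hac hH) S
    _ = 2 * exp (H - 1) / r * max 1 (logb 2 S) := div_mul_eq_mul_div _ _ _ |>.symm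
end

section
/- Let (Ω,Σ) be a measurable space, and let 𝔭, 𝔮 be probability measures on Ω with 𝔭 ≪ 𝔮 and H := H(𝔭|𝔮) < ∞. Let h : Ω → (0,∞) be measurable and let p, q > 0 be real exponents such that ∫ h^q d𝔮 < ∞ and ∫ h^{−p} d𝔮 < ∞. If 𝔮({h ≥ 1}) = 1, then ∫ |log h| d𝔭 ≤ 2·e^{H−1} · max( 1/min(p,q), log₂ ‖h‖_{L^q(𝔮)} ); if instead 𝔮({h ≥ 1}) = 0, then ∫ |log h| d𝔭 ≤ 2·e^{H−1} · max( 1/min(p,q), log₂ ‖h^{−1}‖_{L^p(𝔮)} ). -/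
open MeasureTheory Real

private lemma young_aux (a b : ℝ) (ha : 0 ≤ a) :
    a * b ≤ a * Real.log a - a + Real.exp b := by
  rcases eq_or_lt_of_le ha with h | h
  · simp [← h]; positivity
  · have h1 : a * Real.exp (b - Real.log a) = Real.exp b := by
      rw [Real.exp_sub, Real.exp_log h]; field_simp
    have h2 : (b - Real.log a) + 1 ≤ Real.exp (b - Real.log a) := Real.add_one_le_exp _
    nlinarith [h]

private lemma dv_aux {Ω : Type*} [MeasurableSpace Ω]
    (𝔭 𝔮 : Measure Ω) [IsProbabilityMeasure 𝔭] [IsProbabilityMeasure 𝔮]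
    (hac : 𝔭 ≪ 𝔮)
    (hH : Integrable (fun x => Real.log ((𝔭.rnDeriv 𝔮 x).toReal)) 𝔭)
    (g : Ω → ℝ) (hg : Integrable g 𝔭) (hge : Integrable (fun x => Real.exp (g x)) 𝔮) :
    ∫ x, g x ∂𝔭 ≤ (∫ x, Real.log ((𝔭.rnDeriv 𝔮 x).toReal) ∂𝔭)
      + Real.log (∫ x, Real.exp (g x) ∂𝔮) := by
  set ρ : Ω → ℝ := fun x => (𝔭.rnDeriv 𝔮 x).toReal with hρ
  have hIpos : 0 < ∫ x, Real.exp (g x) ∂𝔮 := integral_exp_pos hge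
  set c : ℝ := Real.log (∫ x, Real.exp (g x) ∂𝔮) with hc
  have h1 : Integrable (fun x => ρ x * (g x - c)) 𝔮 := by
    have := (integrable_rnDeriv_smul_iff hac (f := fun x => g x - c)).mpr
      (hg.sub (integrable_const c))
    simpa [smul_eq_mul] using this
  have h2 : Integrable (fun x => ρ x * Real.log (ρ x)) 𝔮 := by
    have := (integrable_rnDeriv_smul_iff hac
      (f := fun x => Real.log (ρ x))).mpr hH
    simpa [smul_eq_mul] using this
  have h3 : Integrable ρ 𝔮 := Measure.integrable_toReal_rnDeriv
  have h4 : Integrable (fun x => Real.exp (g x - c)) 𝔮 := by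
    have := hge.const_mul (Real.exp (-c))
    simpa [← Real.exp_add, add_comm, sub_eq_add_neg, add_comm (-c)] using this
  have hmono : ∫ x, ρ x * (g x - c) ∂𝔮
      ≤ ∫ x, (ρ x * Real.log (ρ x) - ρ x + Real.exp (g x - c)) ∂𝔮 := by
    refine integral_mono h1 ((h2.sub h3).add h4) (fun x => ?_)
    exact young_aux (ρ x) (g x - c) ENNReal.toReal_nonneg
  have hL : ∫ x, ρ x * (g x - c) ∂𝔮 = (∫ x, g x ∂𝔭) - c := by
    have := integral_rnDeriv_smul hac (f := fun x => g x - c)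
    simp only [smul_eq_mul] at this
    rw [this, integral_sub hg (integrable_const c), integral_const]
    simp
  have hρint : ∫ x, ρ x ∂𝔮 = 1 := by
    rw [Measure.integral_toReal_rnDeriv hac]; simp
  have hρlog : ∫ x, ρ x * Real.log (ρ x) ∂𝔮
      = ∫ x, Real.log ((𝔭.rnDeriv 𝔮 x).toReal) ∂𝔭 := by
    have := integral_rnDeriv_smul hac (f := fun x => Real.log (ρ x))
    simpa [smul_eq_mul] using this
  have hexpint : ∫ x, Real.exp (g x - c) ∂𝔮 = 1 := by
    have : (fun x => Real.exp (g x - c)) = fun x => Real.exp (-c) * Real.exp (g x) := by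
      funext x; rw [← Real.exp_add]; ring_nf
    rw [this, integral_const_mul, hc, Real.exp_neg, Real.exp_log hIpos]
    field_simp
  have hR : ∫ x, (ρ x * Real.log (ρ x) - ρ x + Real.exp (g x - c)) ∂𝔮
      = (∫ x, Real.log ((𝔭.rnDeriv 𝔮 x).toReal) ∂𝔭) - 1 + 1 := by
    have h23 : Integrable (fun x => ρ x * Real.log (ρ x) - ρ x) 𝔮 := h2.sub h3
    rw [integral_add h23 h4, integral_sub h2 h3, hρint, hρlog, hexpint]
  rw [hL, hR] at hmono
  linarith

private lemma assemble_aux (H r I m : ℝ) (hH0 : 0 ≤ H) (hr : 0 < r) (hI : 1 ≤ I)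
    (hm : 0 < m) (hmr : m ≤ r) :
    (H + Real.log I) / r ≤ 2 * Real.exp (H - 1) * max (1 / m) (Real.logb 2 (I ^ (1 / r))) := by
  have hIlog : 0 ≤ Real.log I := Real.log_nonneg hI
  have hIpos : 0 < I := lt_of_lt_of_le one_pos hI
  have hL : Real.logb 2 (I ^ (1 / r)) = (1 / r * Real.log I) / Real.log 2 := by
    rw [Real.logb, Real.log_rpow hIpos]
  have hlog2 : 0 < Real.log 2 := Real.log_pos one_lt_two
  set L : ℝ := Real.logb 2 (I ^ (1 / r)) with hLdef
  set X : ℝ := max (1 / m) L with hX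
  have hXm : 1 / m ≤ X := le_max_left _ _
  have hXL : L ≤ X := le_max_right _ _
  have hmr' : 1 / r ≤ 1 / m := one_div_le_one_div_of_le hm hmr
  have hrpos : 0 < 1 / r := by positivity
  have hL0 : 0 ≤ L := by rw [hL]; positivity
  have hX0 : 0 < X := lt_of_lt_of_le (by positivity : (0:ℝ) < 1 / m) hXm
  have hexp : H + Real.log 2 ≤ 2 * Real.exp (H - 1) := by
    have h1 : H - 1 + Real.log 2 + 1 ≤ Real.exp (H - 1 + Real.log 2) :=
      Real.add_one_le_exp _
    rw [Real.exp_add, Real.exp_log two_pos] at h1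
    linarith
  have hlog2L : Real.log 2 * L = 1 / r * Real.log I := by
    rw [hL]; field_simp
  have step1 : (H + Real.log I) / r ≤ H * X + Real.log 2 * L := by
    rw [hlog2L, div_eq_mul_inv, ← one_div]
    have : H * (1 / r) ≤ H * X :=
      mul_le_mul_of_nonneg_left (le_trans hmr' hXm) hH0
    nlinarith
  have step2 : H * X + Real.log 2 * L ≤ (H + Real.log 2) * X := by
    nlinarith
  have step3 : (H + Real.log 2) * X ≤ 2 * Real.exp (H - 1) * X :=
    mul_le_mul_of_nonneg_right hexp hX0.le
  linarith

/-- Remark, eq. (extreme:no:measure).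
If `𝔭 ≪ 𝔮` are probability measures with finite relative entropy
`H = ∫ log (d𝔭/d𝔮) d𝔭`, `h` is a positive measurable function with
`h ∈ L^q(𝔮)` and `h⁻¹ ∈ L^p(𝔮)` for some `p, q > 0`, then:
if `𝔮({h ≥ 1}) = 1` then `∫ |log h| d𝔭 ≤ 2 e^{H-1} max(1/min(p,q), log₂ ‖h‖_q)`;
if `𝔮({h ≥ 1}) = 0` then `∫ |log h| d𝔭 ≤ 2 e^{H-1} max(1/min(p,q), log₂ ‖h⁻¹‖_p)`. -/
theorem log_integrability_extreme_cases
    {Ω : Type*} [MeasurableSpace Ω]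
    (𝔭 𝔮 : Measure Ω) [IsProbabilityMeasure 𝔭] [IsProbabilityMeasure 𝔮]
    (hac : 𝔭 ≪ 𝔮)
    (hH : Integrable (fun x => Real.log ((𝔭.rnDeriv 𝔮 x).toReal)) 𝔭)
    (h : Ω → ℝ) (hmeas : Measurable h) (hpos : ∀ x, 0 < h x)
    (p q : ℝ) (hp : 0 < p) (hq : 0 < q)
    (hhq : Integrable (fun x => h x ^ q) 𝔮)
    (hhp : Integrable (fun x => h x ^ (-p)) 𝔮) :
    (𝔮 {x | 1 ≤ h x} = 1 →
      ∫ x, |Real.log (h x)| ∂𝔭 ≤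
        2 * Real.exp ((∫ x, Real.log ((𝔭.rnDeriv 𝔮 x).toReal) ∂𝔭) - 1) *
          max (1 / min p q) (Real.logb 2 ((∫ x, h x ^ q ∂𝔮) ^ (1 / q)))) ∧
    (𝔮 {x | 1 ≤ h x} = 0 →
      ∫ x, |Real.log (h x)| ∂𝔭 ≤
        2 * Real.exp ((∫ x, Real.log ((𝔭.rnDeriv 𝔮 x).toReal) ∂𝔭) - 1) *
          max (1 / min p q) (Real.logb 2 ((∫ x, h x ^ (-p) ∂𝔮) ^ (1 / p)))) := by
  set H : ℝ := ∫ x, Real.log ((𝔭.rnDeriv 𝔮 x).toReal) ∂𝔭 with hHdef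
  have hH0 : 0 ≤ H := by
    have h0 := dv_aux 𝔭 𝔮 hac hH (fun _ => 0) (integrable_const 0)
      (by simpa using (integrable_const 1 : Integrable (fun _ : Ω => (1:ℝ)) 𝔮))
    simpa using h0
  have hmin : 0 < min p q := lt_min hp hq
  have hlogm : AEStronglyMeasurable (fun x => Real.log (h x)) 𝔭 :=
    (Real.measurable_log.comp hmeas).aestronglyMeasurable
  have hrhs_nonneg : ∀ c t : ℝ, 0 ≤ 2 * Real.exp c * max (1 / min p q) t := by
    intro c t
    refine mul_nonneg (by positivity) (le_trans ?_ (le_max_left _ _))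
    positivity
  have hms : MeasurableSet {x | 1 ≤ h x} := measurableSet_le measurable_const hmeas
  constructor
  · intro h1
    have hae𝔮 : ∀ᵐ x ∂𝔮, 1 ≤ h x := by
      rw [ae_iff]
      rw [show {x | ¬ 1 ≤ h x} = {x | 1 ≤ h x}ᶜ from rfl, measure_compl hms (by simp), h1]
      simp
    have hae𝔭 : ∀ᵐ x ∂𝔭, 1 ≤ h x := hac.ae_le hae𝔮
    have hI1 : 1 ≤ ∫ x, h x ^ q ∂𝔮 := by
      have hmono : ∀ᵐ x ∂𝔮, (1:ℝ) ≤ h x ^ q :=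
        hae𝔮.mono fun x hx => Real.one_le_rpow hx hq.le
      calc (1:ℝ) = ∫ _, (1:ℝ) ∂𝔮 := by simp
        _ ≤ _ := integral_mono_ae (integrable_const 1) hhq hmono
    by_cases hint : Integrable (fun x => Real.log (h x)) 𝔭
    · have heq : ∫ x, |Real.log (h x)| ∂𝔭 = ∫ x, Real.log (h x) ∂𝔭 :=
        integral_congr_ae (hae𝔭.mono fun x hx => abs_of_nonneg (Real.log_nonneg hx))
      have hgexp : (fun x => Real.exp (q * Real.log (h x))) = fun x => h x ^ q := by
        funext x; rw [Real.rpow_def_of_pos (hpos x), mul_comm]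
      have hdv := dv_aux 𝔭 𝔮 hac hH (fun x => q * Real.log (h x))
        (hint.const_mul q) (by rw [hgexp]; exact hhq)
      simp only [hgexp, integral_const_mul] at hdv
      have key : ∫ x, Real.log (h x) ∂𝔭 ≤ (H + Real.log (∫ x, h x ^ q ∂𝔮)) / q := by
        rw [le_div_iff₀ hq]; linarith
      have hass := assemble_aux H q (∫ x, h x ^ q ∂𝔮) (min p q) hH0 hq hI1 hmin
        (min_le_right p q)
      rw [heq]
      linarith
    · have habs : ¬ Integrable (fun x => |Real.log (h x)|) 𝔭 := by
        intro hcontra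
        refine hint ((integrable_norm_iff hlogm).mp ?_)
        simpa [Real.norm_eq_abs] using hcontra
      rw [integral_undef habs]
      exact hrhs_nonneg _ _
  · intro h0
    have hae𝔮 : ∀ᵐ x ∂𝔮, h x < 1 := by
      rw [ae_iff]
      convert h0 using 2
      ext x; simp [not_lt]
    have hae𝔭 : ∀ᵐ x ∂𝔭, h x < 1 := hac.ae_le hae𝔮
    have hI1 : 1 ≤ ∫ x, h x ^ (-p) ∂𝔮 := by
      have hmono : ∀ᵐ x ∂𝔮, (1:ℝ) ≤ h x ^ (-p) :=
        hae𝔮.mono fun x hx =>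
          Real.one_le_rpow_of_pos_of_le_one_of_nonpos (hpos x) hx.le (by linarith)
      calc (1:ℝ) = ∫ _, (1:ℝ) ∂𝔮 := by simp
        _ ≤ _ := integral_mono_ae (integrable_const 1) hhp hmono
    by_cases hint : Integrable (fun x => Real.log (h x)) 𝔭
    · have heq : ∫ x, |Real.log (h x)| ∂𝔭 = - ∫ x, Real.log (h x) ∂𝔭 := by
        rw [← integral_neg]
        exact integral_congr_ae (hae𝔭.mono fun x hx =>
          abs_of_nonpos (Real.log_nonpos (hpos x).le hx.le))
      have hgexp : (fun x => Real.exp (-p * Real.log (h x))) = fun x => h x ^ (-p) := by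
        funext x; rw [Real.rpow_def_of_pos (hpos x), mul_comm]
      have hdv := dv_aux 𝔭 𝔮 hac hH (fun x => -p * Real.log (h x))
        (hint.const_mul (-p)) (by rw [hgexp]; exact hhp)
      simp only [hgexp, integral_const_mul] at hdv
      have key : - ∫ x, Real.log (h x) ∂𝔭 ≤ (H + Real.log (∫ x, h x ^ (-p) ∂𝔮)) / p := by
        rw [le_div_iff₀ hp]; linarith
      have hass := assemble_aux H p (∫ x, h x ^ (-p) ∂𝔮) (min p q) hH0 hp hI1 hmin
        (min_le_left p q)
      rw [heq]
      linarith
    · have habs : ¬ Integrable (fun x => |Real.log (h x)|) 𝔭 := by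
        intro hcontra
        refine hint ((integrable_norm_iff hlogm).mp ?_)
        simpa [Real.norm_eq_abs] using hcontra
      rw [integral_undef habs]
      exact hrhs_nonneg _ _
end

section
/- Let 𝔮 be a probability measure on a measurable space (Ω,Σ) and let 𝔭 be a probability measure with 𝔭 ≪ 𝔮 and H(𝔭|𝔮) < ∞. Then the Luxemburg norm of the Radon–Nikodym derivative d𝔭/d𝔮 with respect to the Young function θ*(s) = s·log s − s + 1 (for s > 0, with θ*(0) := 1) satisfies inf{ b > 0 : ∫ θ*( (d𝔭/d𝔮)/b ) d𝔮 ≤ 1 } = e^{H(𝔭|𝔮) − 1}. -/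
open MeasureTheory Real

/-! With `f = d𝔭/d𝔮` one has `∫ f d𝔮 = 1`, `∫ f log f d𝔮 = H(𝔭|𝔮) =: H`, and
`θ*(s / b) = (s log s - s log b - s) / b + 1`. Hence `∫ θ*(f / b) d𝔮 ≤ 1` iff
`(H - log b - 1) / b ≤ 0`, i.e. iff `b ≥ e^{H - 1}`: the admissible set is the ray `[e^{H - 1}, ∞)`. -/

/-- The Young function `θ*(s) = s log s - s + 1` (for `s ≥ 0`; note that with
Lean's convention `0 * log 0 = 0` this formula also gives `θ*(0) = 1`). -/
noncomputable def thetaStar (s : ℝ) : ℝ := s * Real.log s - s + 1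

lemma thetaStar_div (s : ℝ) {b : ℝ} (hb : b ≠ 0) :
    thetaStar (s / b) = (s * log s - s * log b - s) / b + 1 := by
  rcases eq_or_ne s 0 with rfl | hs
  · simp [thetaStar]
  · rw [thetaStar, log_div hs hb]
    field_simp

lemma integral_thetaStar_div {Ω : Type*} [MeasurableSpace Ω] {μ : Measure Ω}
    [IsProbabilityMeasure μ] {f : Ω → ℝ} (hf : Integrable f μ)
    (hf_log : Integrable (fun x => f x * log (f x)) μ) {b : ℝ} (hb : b ≠ 0) :
    ∫ x, thetaStar (f x / b) ∂μ
      = (∫ x, f x * log (f x) ∂μ - (∫ x, f x ∂μ) * log b - ∫ x, f x ∂μ) / b + 1 := by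
  have h_sub : Integrable (fun x => f x * log (f x) - f x * log b) μ :=
    hf_log.sub (hf.mul_const _)
  have h_num : Integrable (fun x => f x * log (f x) - f x * log b - f x) μ := h_sub.sub hf
  simp_rw [thetaStar_div _ hb]
  rw [integral_add (h_num.div_const b) (integrable_const 1), integral_div, integral_sub h_sub hf,
    integral_sub hf_log (hf.mul_const _), integral_mul_const]
  simp

section rnDeriv

variable {Ω : Type*} [MeasurableSpace Ω] {μ ν : Measure Ω}
  [IsProbabilityMeasure μ] [IsProbabilityMeasure ν]

lemma integral_thetaStar_rnDeriv_div (hμν : μ ≪ ν) (h_llr : Integrable (llr μ ν) μ)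
    {b : ℝ} (hb : b ≠ 0) :
    ∫ x, thetaStar ((μ.rnDeriv ν x).toReal / b) ∂ν = (∫ x, llr μ ν x ∂μ - log b - 1) / b + 1 := by
  rw [integral_thetaStar_div Measure.integrable_toReal_rnDeriv
      ((integrable_rnDeriv_mul_log_iff hμν).2 h_llr) hb,
    integral_rnDeriv_mul_log hμν, Measure.integral_toReal_rnDeriv hμν]
  simp

lemma integral_thetaStar_rnDeriv_div_le_one_iff (hμν : μ ≪ ν)
    (h_llr : Integrable (llr μ ν) μ) {b : ℝ} (hb : 0 < b) :
    ∫ x, thetaStar ((μ.rnDeriv ν x).toReal / b) ∂ν ≤ 1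
      ↔ exp (∫ x, llr μ ν x ∂μ - 1) ≤ b := by
  rw [integral_thetaStar_rnDeriv_div hμν h_llr hb.ne', add_le_iff_nonpos_left,
    div_le_iff₀ hb, zero_mul, ← le_log_iff_exp_le hb]
  constructor <;> intro h <;> linarith

end rnDeriv

/-- the Luxemburg norm of the Radon–Nikodym derivative `d𝔭/d𝔮`
with respect to the Young function `θ*(s) = s log s - s + 1` equals
`e^{H(𝔭|𝔮) - 1}`, where `H(𝔭|𝔮) = ∫ log (d𝔭/d𝔮) d𝔭` is the (finite) relative
entropy. -/
theorem luxemburg_norm_rnDeriv_eq_exp_entropy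
    {Ω : Type*} [MeasurableSpace Ω]
    (𝔭 𝔮 : Measure Ω) [IsProbabilityMeasure 𝔭] [IsProbabilityMeasure 𝔮]
    (hac : 𝔭 ≪ 𝔮)
    (hH : Integrable (fun x => Real.log ((𝔭.rnDeriv 𝔮 x).toReal)) 𝔭) :
    sInf {b : ℝ | 0 < b ∧ ∫ x, thetaStar ((𝔭.rnDeriv 𝔮 x).toReal / b) ∂𝔮 ≤ 1}
      = Real.exp ((∫ x, Real.log ((𝔭.rnDeriv 𝔮 x).toReal) ∂𝔭) - 1) := by
  have h_admissible : {b : ℝ | 0 < b ∧ ∫ x, thetaStar ((𝔭.rnDeriv 𝔮 x).toReal / b) ∂𝔮 ≤ 1}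
      = Set.Ici (exp ((∫ x, llr 𝔭 𝔮 x ∂𝔭) - 1)) := by
    ext b
    refine ⟨fun ⟨hb, hle⟩ => (integral_thetaStar_rnDeriv_div_le_one_iff hac hH hb).1 hle,
      fun hb => ?_⟩
    have hb_pos : 0 < b := (exp_pos _).trans_le hb
    exact ⟨hb_pos, (integral_thetaStar_rnDeriv_div_le_one_iff hac hH hb_pos).2 hb⟩
  rw [h_admissible, csInf_Ici, llr_def]
end

section
/- Let 𝔮 be a probability measure on a measurable space (Ω,Σ), let h : Ω → (0,∞) be measurable, and let p, q > 0 be real exponents with ∫ h^q d𝔮 < ∞ and ∫ h^{−p} d𝔮 < ∞. Set λ := 𝔮({h ≥ 1}) and assume 0 < λ < 1. Then for every δ > 0 the Luxemburg norm of log h with respect to the Young function θ(t) = e^t − 1 satisfies ‖log h‖_θ ≤ max( 1/min(δ,p,q), (1/δ)·log₂( λ^{1−δ/q}·‖h‖_{L^q(𝔮)}^δ + (1−λ)^{1−δ/p}·‖h^{−1}‖_{L^p(𝔮)}^δ ) ). -/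
/-!
Put `s := 1 / b` for the bound `b` on the right. On `{h ≥ 1}` the integrand `exp (s |log h|)` is
`h ^ s` and on `{h < 1}` it is `(h⁻¹) ^ s`, so Lyapunov's inequality on each piece bounds
`∫ exp (s |log h|)` by `λ c₁ ^ s + (1 - λ) c₂ ^ s`, where `c₁ = (∫ h ^ q / λ) ^ (1 / q)` and
`c₂ = (∫ h ^ (-p) / (1 - λ)) ^ (1 / p)`. Monotonicity of two-point power means bounds this by
`X ^ (s / δ)` with `X = λ c₁ ^ δ + (1 - λ) c₂ ^ δ` the argument of `log₂`, and `b ≥ (1 / δ) log₂ X`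
gives `X ^ (s / δ) ≤ 2`, that is `∫ θ (|log h| / b) ≤ 1`.
-/

open MeasureTheory Real

section Moments

variable {Ω : Type*} [MeasurableSpace Ω] {f : Ω → ℝ} {s r : ℝ}

theorem integral_rpow_le_rpow_integral_rpow (μ : Measure Ω) [IsProbabilityMeasure μ]
    (hf : 0 ≤ f) (hs : 0 < s) (hsr : s ≤ r) (hfr : Integrable (fun x => f x ^ r) μ) :
    ∫ x, f x ^ s ∂μ ≤ (∫ x, f x ^ r ∂μ) ^ (s / r) := by
  have hr : 0 < r := hs.trans_le hsr
  have hpow : ∀ x, (f x ^ r) ^ (s / r) = f x ^ s := fun x => by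
    rw [← rpow_mul (hf x), mul_div_cancel₀ s hr.ne']
  by_cases hfs : Integrable (fun x => f x ^ s) μ
  · have hconc : ConcaveOn ℝ (Set.Ici 0) fun t : ℝ => t ^ (s / r) :=
      concaveOn_rpow (by positivity) ((div_le_one hr).mpr hsr)
    have hcont : ContinuousOn (fun t : ℝ => t ^ (s / r)) (Set.Ici 0) :=
      continuousOn_id.rpow_const fun _ _ => Or.inr (by positivity)
    simpa only [hpow] using hconc.le_map_integral hcont isClosed_Ici
      (ae_of_all _ fun x => rpow_nonneg (hf x) r) hfr
      (by simpa only [Function.comp_def, hpow] using hfs)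
  · rw [integral_undef hfs]
    exact rpow_nonneg (integral_nonneg fun x => rpow_nonneg (hf x) r) _

theorem integral_rpow_le_measureReal_mul_rpow_integral_rpow (μ : Measure Ω) [IsFiniteMeasure μ]
    (hf : 0 ≤ f) (hs : 0 < s) (hsr : s ≤ r) (hfr : Integrable (fun x => f x ^ r) μ) :
    ∫ x, f x ^ s ∂μ ≤ μ.real Set.univ ^ (1 - s / r) * (∫ x, f x ^ r ∂μ) ^ (s / r) := by
  have hIr : 0 ≤ ∫ x, f x ^ r ∂μ := integral_nonneg fun x => rpow_nonneg (hf x) r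
  rcases eq_zero_or_neZero μ with rfl | _
  · rw [integral_zero_measure]
    exact mul_nonneg (rpow_nonneg measureReal_nonneg _) (rpow_nonneg hIr _)
  set c := (μ Set.univ).toReal
  have hc : 0 < c := ENNReal.toReal_pos (NeZero.ne _) (measure_ne_top _ _)
  have hnorm := integral_rpow_le_rpow_integral_rpow ((μ Set.univ)⁻¹ • μ) hf hs hsr
    (hfr.smul_measure (ENNReal.inv_ne_top.mpr (NeZero.ne _)))
  rw [integral_smul_measure, integral_smul_measure, ENNReal.toReal_inv, smul_eq_mul,
    smul_eq_mul, mul_rpow (inv_nonneg.mpr hc.le) hIr] at hnorm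
  calc ∫ x, f x ^ s ∂μ = c * (c⁻¹ * ∫ x, f x ^ s ∂μ) := by field_simp
    _ ≤ c * (c⁻¹ ^ (s / r) * (∫ x, f x ^ r ∂μ) ^ (s / r)) := by gcongr
    _ = c ^ (1 - s / r) * (∫ x, f x ^ r ∂μ) ^ (s / r) := by
      rw [inv_rpow hc.le, rpow_sub hc, rpow_one]; ring

theorem setIntegral_rpow_le (μ : Measure Ω) [IsFiniteMeasure μ] (A : Set Ω)
    (hf : 0 ≤ f) (hs : 0 < s) (hsr : s ≤ r) (hfr : Integrable (fun x => f x ^ r) μ) :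
    ∫ x in A, f x ^ s ∂μ ≤ μ.real A ^ (1 - s / r) * (∫ x, f x ^ r ∂μ) ^ (s / r) := by
  have hrestrict := integral_rpow_le_measureReal_mul_rpow_integral_rpow (μ.restrict A) hf hs hsr
    hfr.restrict
  rw [measureReal_restrict_apply_univ] at hrestrict
  refine hrestrict.trans (mul_le_mul_of_nonneg_left ?_ (rpow_nonneg measureReal_nonneg _))
  exact rpow_le_rpow (integral_nonneg fun x => rpow_nonneg (hf x) r)
    (setIntegral_le_integral hfr (ae_of_all _ fun x => rpow_nonneg (hf x) r))
    (div_pos hs (hs.trans_le hsr)).le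

end Moments

theorem exp_abs_mul_le_exp_mul_add_exp_mul {y s p q : ℝ} (hsp : s ≤ p) (hsq : s ≤ q) :
    exp (|y| * s) ≤ exp (y * q) + exp (y * -p) := by
  rcases le_total 0 y with hy | hy
  · rw [abs_of_nonneg hy]
    linarith [exp_le_exp.mpr (mul_le_mul_of_nonneg_left hsq hy), exp_pos (y * -p)]
  · rw [abs_of_nonpos hy]
    linarith [exp_le_exp.mpr (by nlinarith : -y * s ≤ y * -p), exp_pos (y * q)]

theorem exp_abs_log_mul_of_one_le {x : ℝ} (hx : 1 ≤ x) (s : ℝ) : exp (|log x| * s) = x ^ s := by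
  rw [abs_of_nonneg (log_nonneg hx), rpow_def_of_pos (by linarith)]

theorem exp_abs_log_mul_of_lt_one {x : ℝ} (hx₀ : 0 < x) (hx₁ : x < 1) (s : ℝ) :
    exp (|log x| * s) = x⁻¹ ^ s := by
  rw [abs_of_neg (log_neg hx₀ hx₁), ← log_inv, rpow_def_of_pos (inv_pos.mpr hx₀)]

section LogMoments

variable {Ω : Type*} [MeasurableSpace Ω] (μ : Measure Ω) {h : Ω → ℝ} {s p q : ℝ}

theorem integrable_exp_abs_log_mul (hmeas : Measurable h) (hpos : ∀ x, 0 < h x)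
    (hsp : s ≤ p) (hsq : s ≤ q)
    (hhq : Integrable (fun x => h x ^ q) μ) (hhp : Integrable (fun x => h x ^ (-p)) μ) :
    Integrable (fun x => exp (|log (h x)| * s)) μ := by
  refine (hhq.add hhp).mono' (hmeas.log.abs.mul_const s).exp.aestronglyMeasurable
    (ae_of_all _ fun x => ?_)
  rw [norm_of_nonneg (exp_pos _).le, Pi.add_apply, rpow_def_of_pos (hpos x),
    rpow_def_of_pos (hpos x)]
  exact exp_abs_mul_le_exp_mul_add_exp_mul hsp hsq

theorem integral_exp_abs_log_mul_le [IsProbabilityMeasure μ] (hmeas : Measurable h)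
    (hpos : ∀ x, 0 < h x) (hs : 0 < s) (hsp : s ≤ p) (hsq : s ≤ q)
    (hhq : Integrable (fun x => h x ^ q) μ) (hhp : Integrable (fun x => h x ^ (-p)) μ) :
    ∫ x, exp (|log (h x)| * s) ∂μ ≤
      μ.real {x | 1 ≤ h x} ^ (1 - s / q) * (∫ x, h x ^ q ∂μ) ^ (s / q)
        + (1 - μ.real {x | 1 ≤ h x}) ^ (1 - s / p) * (∫ x, h x ^ (-p) ∂μ) ^ (s / p) := by
  set A := {x | 1 ≤ h x}
  have hA : MeasurableSet A := measurableSet_le measurable_const hmeas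
  have hinv : (fun x => (h x)⁻¹ ^ p) = fun x => h x ^ (-p) :=
    funext fun x => by rw [inv_rpow (hpos x).le, rpow_neg (hpos x).le]
  rw [← integral_add_compl hA (integrable_exp_abs_log_mul μ hmeas hpos hsp hsq hhq hhp),
    ← probReal_compl_eq_one_sub hA, ← hinv]
  gcongr
  · rw [setIntegral_congr_fun hA fun x hx => exp_abs_log_mul_of_one_le hx s]
    exact setIntegral_rpow_le μ A (fun x => (hpos x).le) hs hsq hhq
  · rw [setIntegral_congr_fun hA.compl fun x hx =>
      exp_abs_log_mul_of_lt_one (hpos x) (not_le.mp hx) s]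
    exact setIntegral_rpow_le μ Aᶜ (fun x => inv_nonneg.mpr (hpos x).le) hs hsp (hinv ▸ hhp)

end LogMoments

theorem mul_div_rpow_one_div_rpow {w I t r : ℝ} (hw : 0 < w) (hI : 0 ≤ I) :
    w * ((I / w) ^ (1 / r)) ^ t = w ^ (1 - t / r) * I ^ (t / r) := by
  rw [div_rpow hI hw.le, div_rpow (rpow_nonneg hI _) (rpow_nonneg hw.le _), ← rpow_mul hI,
    ← rpow_mul hw.le, rpow_sub hw, rpow_one, one_div_mul_eq_div]
  ring

theorem mul_rpow_add_mul_rpow_le {w a b t u : ℝ} (hw₀ : 0 ≤ w) (hw₁ : w ≤ 1) (ha : 0 ≤ a)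
    (hb : 0 ≤ b) (ht : 0 < t) (htu : t ≤ u) :
    w * a ^ t + (1 - w) * b ^ t ≤ (w * a ^ u + (1 - w) * b ^ u) ^ (t / u) := by
  have hu : 0 < u := ht.trans_le htu
  have hpow : ∀ c : ℝ, 0 ≤ c → (c ^ t) ^ (u / t) = c ^ u := fun c hc => by
    rw [← rpow_mul hc, mul_div_cancel₀ u ht.ne']
  have hconv := (convexOn_rpow ((one_le_div ht).mpr htu)).2 (Set.mem_Ici.mpr (rpow_nonneg ha t))
    (Set.mem_Ici.mpr (rpow_nonneg hb t)) hw₀ (sub_nonneg.mpr hw₁) (add_sub_cancel w 1)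
  simp only [smul_eq_mul, hpow a ha, hpow b hb] at hconv
  have hexp : u / t * (t / u) = 1 := by field_simp
  calc w * a ^ t + (1 - w) * b ^ t
      = ((w * a ^ t + (1 - w) * b ^ t) ^ (u / t)) ^ (t / u) := by
        rw [← rpow_mul (by positivity [sub_nonneg.mpr hw₁]), hexp, rpow_one]
    _ ≤ (w * a ^ u + (1 - w) * b ^ u) ^ (t / u) := by gcongr

theorem sum_weighted_moments_le_rpow {w I J s δ p q : ℝ} (hw₀ : 0 < w) (hw₁ : w < 1)
    (hI : 0 ≤ I) (hJ : 0 ≤ J) (hs : 0 < s) (hsδ : s ≤ δ) :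
    w ^ (1 - s / q) * I ^ (s / q) + (1 - w) ^ (1 - s / p) * J ^ (s / p) ≤
      (w ^ (1 - δ / q) * I ^ (δ / q) + (1 - w) ^ (1 - δ / p) * J ^ (δ / p)) ^ (s / δ) := by
  have hw₁' : 0 < 1 - w := sub_pos.mpr hw₁
  rw [← mul_div_rpow_one_div_rpow hw₀ hI, ← mul_div_rpow_one_div_rpow hw₀ hI,
    ← mul_div_rpow_one_div_rpow hw₁' hJ, ← mul_div_rpow_one_div_rpow hw₁' hJ]
  exact mul_rpow_add_mul_rpow_le hw₀.le hw₁.le (rpow_nonneg (div_nonneg hI hw₀.le) _)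
    (rpow_nonneg (div_nonneg hJ hw₁'.le) _) hs hsδ

theorem rpow_le_two_of_mul_logb_le_one {X t : ℝ} (hX : 0 ≤ X) (ht : 0 < t)
    (h : t * logb 2 X ≤ 1) : X ^ t ≤ 2 := by
  rcases hX.eq_or_lt with rfl | hX
  · rw [zero_rpow ht.ne']
    exact zero_le_two
  calc X ^ t = 2 ^ (t * logb 2 X) := by
        rw [mul_comm, rpow_mul zero_le_two, rpow_logb zero_lt_two (by norm_num) hX]
    _ ≤ 2 ^ (1 : ℝ) := rpow_le_rpow_of_exponent_le one_le_two h
    _ = 2 := rpow_one 2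

theorem sInf_le_of_integral_exp_abs_div_le_two {Ω : Type*} [MeasurableSpace Ω] (μ : Measure Ω)
    [IsProbabilityMeasure μ] {u : Ω → ℝ} {b : ℝ} (hb : 0 < b)
    (hint : Integrable (fun x => exp (|u x| / b)) μ) (h2 : ∫ x, exp (|u x| / b) ∂μ ≤ 2) :
    sInf {b : ℝ | 0 < b ∧ ∫ x, (exp (|u x| / b) - 1) ∂μ ≤ 1} ≤ b := by
  refine csInf_le ⟨0, fun _ hb' => hb'.1.le⟩ ⟨hb, ?_⟩
  rw [integral_sub hint (integrable_const 1), integral_const, probReal_univ, one_smul]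
  linarith

/-- eq. (delta:norm): bound on the Luxemburg norm of `log h`
with respect to the Young function `θ(t) = e^t - 1`, for a positive measurable
function `h` with `h ∈ L^q(𝔮)`, `h⁻¹ ∈ L^p(𝔮)` and `λ := 𝔮({h ≥ 1}) ∈ (0,1)`:
for every `δ > 0`,
`‖log h‖_θ ≤ max(1/min(δ,p,q), (1/δ) log₂(λ^{1-δ/q} ‖h‖_q^δ + (1-λ)^{1-δ/p} ‖h⁻¹‖_p^δ))`. -/
theorem luxemburg_norm_log_bound
    {Ω : Type*} [MeasurableSpace Ω]
    (𝔮 : Measure Ω) [IsProbabilityMeasure 𝔮]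
    (h : Ω → ℝ) (hmeas : Measurable h) (hpos : ∀ x, 0 < h x)
    (p q : ℝ) (hp : 0 < p) (hq : 0 < q)
    (hhq : Integrable (fun x => h x ^ q) 𝔮)
    (hhp : Integrable (fun x => h x ^ (-p)) 𝔮)
    (hlam0 : 0 < 𝔮 {x | 1 ≤ h x}) (hlam1 : 𝔮 {x | 1 ≤ h x} < 1)
    (δ : ℝ) (hδ : 0 < δ) :
    sInf {b : ℝ | 0 < b ∧ ∫ x, (Real.exp (|Real.log (h x)| / b) - 1) ∂𝔮 ≤ 1} ≤
      max (1 / min δ (min p q))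
        ((1 / δ) * Real.logb 2
          ((𝔮 {x | 1 ≤ h x}).toReal ^ (1 - δ / q) * ((∫ x, h x ^ q ∂𝔮) ^ (1 / q)) ^ δ
            + (1 - (𝔮 {x | 1 ≤ h x}).toReal) ^ (1 - δ / p)
                * ((∫ x, h x ^ (-p) ∂𝔮) ^ (1 / p)) ^ δ)) := by
  have hIq : 0 ≤ ∫ x, h x ^ q ∂𝔮 := integral_nonneg fun x => rpow_nonneg (hpos x).le q
  have hIp : 0 ≤ ∫ x, h x ^ (-p) ∂𝔮 := integral_nonneg fun x => rpow_nonneg (hpos x).le (-p)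
  rw [← rpow_mul hIq, ← rpow_mul hIp, one_div_mul_eq_div q δ, one_div_mul_eq_div p δ]
  set lam := (𝔮 {x | 1 ≤ h x}).toReal
  have hlam₀ : 0 < lam := ENNReal.toReal_pos hlam0.ne' (measure_ne_top _ _)
  have hlam₁ : lam < 1 := ENNReal.toReal_lt_of_lt_ofReal (by rwa [ENNReal.ofReal_one])
  set X := lam ^ (1 - δ / q) * (∫ x, h x ^ q ∂𝔮) ^ (δ / q)
    + (1 - lam) ^ (1 - δ / p) * (∫ x, h x ^ (-p) ∂𝔮) ^ (δ / p)
  set b := max (1 / min δ (min p q)) ((1 / δ) * logb 2 X)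
  have hb : 0 < b := (by positivity : 0 < 1 / min δ (min p q)).trans_le (le_max_left _ _)
  have hs : b⁻¹ ≤ min δ (min p q) :=
    inv_le_of_inv_le₀ (lt_min hδ (lt_min hp hq)) (by rw [← one_div]; exact le_max_left _ _)
  have hsδ : b⁻¹ ≤ δ := hs.trans (min_le_left _ _)
  have hsp : b⁻¹ ≤ p := hs.trans ((min_le_right _ _).trans (min_le_left _ _))
  have hsq : b⁻¹ ≤ q := hs.trans ((min_le_right _ _).trans (min_le_right _ _))
  refine sInf_le_of_integral_exp_abs_div_le_two 𝔮 hb ?_ ?_ <;> simp only [div_eq_mul_inv]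
  · exact integrable_exp_abs_log_mul 𝔮 hmeas hpos hsp hsq hhq hhp
  calc ∫ x, exp (|log (h x)| * b⁻¹) ∂𝔮
      ≤ lam ^ (1 - b⁻¹ / q) * (∫ x, h x ^ q ∂𝔮) ^ (b⁻¹ / q)
        + (1 - lam) ^ (1 - b⁻¹ / p) * (∫ x, h x ^ (-p) ∂𝔮) ^ (b⁻¹ / p) :=
        integral_exp_abs_log_mul_le 𝔮 hmeas hpos (inv_pos.mpr hb) hsp hsq hhq hhp
    _ ≤ X ^ (b⁻¹ / δ) := sum_weighted_moments_le_rpow hlam₀ hlam₁ hIq hIp (inv_pos.mpr hb) hsδ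
    _ ≤ 2 := by
        refine rpow_le_two_of_mul_logb_le_one (by positivity) (by positivity) ?_
        calc b⁻¹ / δ * logb 2 X = b⁻¹ * (1 / δ * logb 2 X) := by ring
          _ ≤ b⁻¹ * b := by gcongr; exact le_max_right _ _
          _ = 1 := inv_mul_cancel₀ hb.ne'
end

section
/- Let d ≥ 1 and T > 0, and let R_T be the measure on ℝ^d × ℝ^d with density (x,y) ↦ exp(−|x−y|²/(2T)) with respect to the product of Lebesgue measures. Let μ, ν be probability measures on ℝ^d with finite second moments, absolutely continuous with respect to Lebesgue measure, and with finite Lebesgue entropies Ent(μ) := ∫ log(dμ/dLeb) dμ ∈ ℝ and Ent(ν) ∈ ℝ. Then for every coupling π ∈ Π(μ,ν) with H(π | μ⊗ν) < ∞ one has π ≪ R_T, log(dπ/dR_T) ∈ L¹(π), and T·H(π | R_T) − T·Ent(μ) − T·Ent(ν) = ∫ |x−y|²/2 dπ(x,y) + T·H(π | μ⊗ν). -/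
open MeasureTheory

/-- The heat-kernel reference measure `R_T` on `ℝ^d × ℝ^d`, with density
`(x,y) ↦ exp(-|x-y|²/(2T))` with respect to the product of Lebesgue measures. -/
noncomputable def heatRefMeasure (d : ℕ) (T : ℝ) :
    Measure (EuclideanSpace ℝ (Fin d) × EuclideanSpace ℝ (Fin d)) :=
  ((volume : Measure (EuclideanSpace ℝ (Fin d))).prod volume).withDensity
    fun z => ENNReal.ofReal (Real.exp (-‖z.1 - z.2‖ ^ 2 / (2 * T)))

lemma prod_withDensity_eq {α β : Type*} [MeasurableSpace α] [MeasurableSpace β]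
    (μ : Measure α) (ν : Measure β) [SigmaFinite μ] [SigmaFinite ν]
    {f : α → ENNReal} {g : β → ENNReal} (hf : Measurable f) (hg : Measurable g)
    (hft : ∀ᵐ a ∂μ, f a ≠ ⊤) (hgt : ∀ᵐ b ∂ν, g b ≠ ⊤) :
    (μ.withDensity f).prod (ν.withDensity g)
      = (μ.prod ν).withDensity (fun z => f z.1 * g z.2) := by
  haveI := SigmaFinite.withDensity_of_ne_top hft
  haveI := SigmaFinite.withDensity_of_ne_top hgt
  refine Measure.prod_eq fun s t hs ht => ?_
  rw [withDensity_apply _ (hs.prod ht), ← Measure.prod_restrict,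
    lintegral_prod_mul hf.aemeasurable hg.aemeasurable,
    withDensity_apply _ hs, withDensity_apply _ ht]


/-- the algebraic identity linking the Schrödinger problem with
reference `R_T` and the entropic optimal transport problem with quadratic cost:
for marginals `μ, ν` with finite second moments and finite Lebesgue entropies,
and any coupling `π ∈ Π(μ,ν)` with `H(π | μ⊗ν) < ∞`, one has `π ≪ R_T`,
`log (dπ/dR_T) ∈ L¹(π)`, and
`T·H(π|R_T) - T·Ent(μ) - T·Ent(ν) = ∫ |x-y|²/2 dπ + T·H(π|μ⊗ν)`. -/
theorem schroedinger_eot_identity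
    (d : ℕ) (hd : 1 ≤ d) (T : ℝ) (hT : 0 < T)
    (μ ν : Measure (EuclideanSpace ℝ (Fin d)))
    [IsProbabilityMeasure μ] [IsProbabilityMeasure ν]
    (hμ2 : Integrable (fun x => ‖x‖ ^ 2) μ)
    (hν2 : Integrable (fun x => ‖x‖ ^ 2) ν)
    (hμac : μ ≪ volume) (hνac : ν ≪ volume)
    (hμent : Integrable (fun x => Real.log ((μ.rnDeriv volume x).toReal)) μ)
    (hνent : Integrable (fun y => Real.log ((ν.rnDeriv volume y).toReal)) ν)
    (π : Measure (EuclideanSpace ℝ (Fin d) × EuclideanSpace ℝ (Fin d)))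
    [IsProbabilityMeasure π]
    (hπ1 : π.map Prod.fst = μ) (hπ2 : π.map Prod.snd = ν)
    (hπac : π ≪ μ.prod ν)
    (hπent : Integrable (fun z => Real.log ((π.rnDeriv (μ.prod ν) z).toReal)) π) :
    π ≪ heatRefMeasure d T ∧
    Integrable (fun z => Real.log ((π.rnDeriv (heatRefMeasure d T) z).toReal)) π ∧
    T * (∫ z, Real.log ((π.rnDeriv (heatRefMeasure d T) z).toReal) ∂π)
        - T * (∫ x, Real.log ((μ.rnDeriv volume x).toReal) ∂μ)
        - T * (∫ y, Real.log ((ν.rnDeriv volume y).toReal) ∂ν)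
      = (∫ z, ‖z.1 - z.2‖ ^ 2 / 2 ∂π)
        + T * (∫ z, Real.log ((π.rnDeriv (μ.prod ν) z).toReal) ∂π) := by
  set E := EuclideanSpace ℝ (Fin d)
  set Λ : Measure (E × E) := (volume : Measure E).prod volume with hΛdef
  set ρ : E × E → ENNReal :=
    fun z => ENNReal.ofReal (Real.exp (-‖z.1 - z.2‖ ^ 2 / (2 * T))) with hρdef
  have hR : heatRefMeasure d T = Λ.withDensity ρ := rfl
  have hρ_cont : Continuous fun z : E × E => Real.exp (-‖z.1 - z.2‖ ^ 2 / (2 * T)) := by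
    fun_prop
  have hρ_meas : Measurable ρ := hρ_cont.measurable.ennreal_ofReal
  have hρ_ne_zero : ∀ z, ρ z ≠ 0 := fun z =>
    (ENNReal.ofReal_pos.mpr (Real.exp_pos _)).ne'
  have hρ_ne_top : ∀ z, ρ z ≠ ⊤ := fun z => ENNReal.ofReal_ne_top
  haveI : SigmaFinite (heatRefMeasure d T) := by
    rw [hR]
    exact SigmaFinite.withDensity_of_ne_top (ae_of_all _ hρ_ne_top)
  have hΛR : Λ ≪ heatRefMeasure d T := by
    rw [hR]
    exact withDensity_absolutelyContinuous' hρ_meas.aemeasurable (ae_of_all _ hρ_ne_zero)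
  have hμνΛ : μ.prod ν ≪ Λ := hμac.prod hνac
  have hπΛ : π ≪ Λ := hπac.trans hμνΛ
  have hπR : π ≪ heatRefMeasure d T := hπΛ.trans hΛR
  set gμ : E → ℝ := fun x => Real.log ((μ.rnDeriv volume x).toReal) with hgμdef
  set gν : E → ℝ := fun y => Real.log ((ν.rnDeriv volume y).toReal) with hgνdef
  refine ⟨hπR, ?_⟩
  -- rnDeriv identities
  have h1 : π.rnDeriv (heatRefMeasure d T) =ᵐ[π] fun z => (ρ z)⁻¹ * π.rnDeriv Λ z := by
    refine hπΛ.ae_eq ?_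
    rw [hR]
    exact Measure.rnDeriv_withDensity_right π Λ hρ_meas.aemeasurable
      (ae_of_all _ hρ_ne_zero) (ae_of_all _ hρ_ne_top)
  have h2 : (fun z => π.rnDeriv (μ.prod ν) z * (μ.prod ν).rnDeriv Λ z) =ᵐ[π]
      π.rnDeriv Λ := hπΛ.ae_eq (Measure.rnDeriv_mul_rnDeriv hπac)
  have hmeas_prodD : Measurable fun z : E × E =>
      μ.rnDeriv volume z.1 * ν.rnDeriv volume z.2 :=
    ((μ.measurable_rnDeriv volume).comp measurable_fst).mul
      ((ν.measurable_rnDeriv volume).comp measurable_snd)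
  have hprod : μ.prod ν = Λ.withDensity
      (fun z => μ.rnDeriv volume z.1 * ν.rnDeriv volume z.2) := by
    conv_lhs => rw [← Measure.withDensity_rnDeriv_eq μ volume hμac,
      ← Measure.withDensity_rnDeriv_eq ν volume hνac]
    exact prod_withDensity_eq _ _ (μ.measurable_rnDeriv volume) (ν.measurable_rnDeriv volume)
      (μ.rnDeriv_ne_top volume) (ν.rnDeriv_ne_top volume)
  have h3 : (μ.prod ν).rnDeriv Λ =ᵐ[π]
      fun z => μ.rnDeriv volume z.1 * ν.rnDeriv volume z.2 := by
    refine hπΛ.ae_eq ?_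
    rw [hprod]
    exact Measure.rnDeriv_withDensity Λ hmeas_prodD
  -- positivity/finiteness facts
  have hp_pos : ∀ᵐ z ∂π, 0 < π.rnDeriv (μ.prod ν) z := Measure.rnDeriv_pos hπac
  have hp_top : ∀ᵐ z ∂π, π.rnDeriv (μ.prod ν) z ≠ ⊤ :=
    (π.rnDeriv_ne_top (μ.prod ν)).filter_mono hπac.ae_le
  have hSμ : MeasurableSet {x : E | 0 < μ.rnDeriv volume x ∧ μ.rnDeriv volume x ≠ ⊤} := by
    have : {x : E | 0 < μ.rnDeriv volume x ∧ μ.rnDeriv volume x ≠ ⊤}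
        = μ.rnDeriv volume ⁻¹' ({0}ᶜ ∩ {⊤}ᶜ) := by
      ext x; simp [pos_iff_ne_zero]
    rw [this]
    exact (μ.measurable_rnDeriv volume)
      (((measurableSet_singleton 0).compl).inter ((measurableSet_singleton ⊤).compl))
  have hSν : MeasurableSet {x : E | 0 < ν.rnDeriv volume x ∧ ν.rnDeriv volume x ≠ ⊤} := by
    have : {x : E | 0 < ν.rnDeriv volume x ∧ ν.rnDeriv volume x ≠ ⊤}
        = ν.rnDeriv volume ⁻¹' ({0}ᶜ ∩ {⊤}ᶜ) := by
      ext x; simp [pos_iff_ne_zero]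
    rw [this]
    exact (ν.measurable_rnDeriv volume)
      (((measurableSet_singleton 0).compl).inter ((measurableSet_singleton ⊤).compl))
  have ha : ∀ᵐ z : E × E ∂π, 0 < μ.rnDeriv volume z.1 ∧ μ.rnDeriv volume z.1 ≠ ⊤ := by
    have hμae : ∀ᵐ x ∂(π.map Prod.fst), 0 < μ.rnDeriv volume x ∧ μ.rnDeriv volume x ≠ ⊤ := by
      rw [hπ1]
      filter_upwards [Measure.rnDeriv_pos hμac,
        (μ.rnDeriv_ne_top volume).filter_mono hμac.ae_le] with x h1 h2
      exact ⟨h1, h2⟩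
    exact (ae_map_iff measurable_fst.aemeasurable hSμ).mp hμae
  have hb : ∀ᵐ z : E × E ∂π, 0 < ν.rnDeriv volume z.2 ∧ ν.rnDeriv volume z.2 ≠ ⊤ := by
    have hνae : ∀ᵐ y ∂(π.map Prod.snd), 0 < ν.rnDeriv volume y ∧ ν.rnDeriv volume y ≠ ⊤ := by
      rw [hπ2]
      filter_upwards [Measure.rnDeriv_pos hνac,
        (ν.rnDeriv_ne_top volume).filter_mono hνac.ae_le] with y h1 h2
      exact ⟨h1, h2⟩
    exact (ae_map_iff measurable_snd.aemeasurable hSν).mp hνae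
  -- key pointwise identity
  have hkey : (fun z => Real.log ((π.rnDeriv (heatRefMeasure d T) z).toReal)) =ᵐ[π]
      fun z => ‖z.1 - z.2‖ ^ 2 / (2 * T)
        + (gμ z.1
          + gν z.2
          + Real.log ((π.rnDeriv (μ.prod ν) z).toReal)) := by
    filter_upwards [h1, h2, h3, hp_pos, hp_top, ha, hb] with z hz1 hz2 hz3 hzp hzt hza hzb
    have hz : π.rnDeriv (heatRefMeasure d T) z
        = (ρ z)⁻¹ * (π.rnDeriv (μ.prod ν) z * (μ.rnDeriv volume z.1 * ν.rnDeriv volume z.2)) := by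
      rw [hz1, ← hz2, hz3]
    rw [hz]
    have he : (0:ℝ) < Real.exp (-‖z.1 - z.2‖ ^ 2 / (2 * T)) := Real.exp_pos _
    have hρto : ((ρ z)⁻¹).toReal = (Real.exp (-‖z.1 - z.2‖ ^ 2 / (2 * T)))⁻¹ := by
      rw [ENNReal.toReal_inv, hρdef, ENNReal.toReal_ofReal he.le]
    rw [ENNReal.toReal_mul, ENNReal.toReal_mul, ENNReal.toReal_mul, hρto]
    have hpz : ((π.rnDeriv (μ.prod ν) z).toReal) ≠ 0 :=
      (ENNReal.toReal_pos hzp.ne' hzt).ne'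
    have haz : ((μ.rnDeriv volume z.1).toReal) ≠ 0 :=
      (ENNReal.toReal_pos hza.1.ne' hza.2).ne'
    have hbz : ((ν.rnDeriv volume z.2).toReal) ≠ 0 :=
      (ENNReal.toReal_pos hzb.1.ne' hzb.2).ne'
    rw [Real.log_mul (inv_ne_zero he.ne') (by positivity),
      Real.log_mul hpz (by positivity), Real.log_mul haz hbz,
      Real.log_inv, Real.log_exp]
    ring
  -- integrability of pieces
  have hg1meas : AEStronglyMeasurable gμ μ :=
    (Real.measurable_log.comp (μ.measurable_rnDeriv volume).ennreal_toReal).aestronglyMeasurable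
  have hg2meas : AEStronglyMeasurable gν ν :=
    (Real.measurable_log.comp (ν.measurable_rnDeriv volume).ennreal_toReal).aestronglyMeasurable
  have hμent' : Integrable gμ (π.map Prod.fst) := by rw [hπ1]; exact hμent
  have hIa : Integrable (fun z : E × E => gμ z.1) π :=
    (integrable_map_measure (by rw [hπ1]; exact hg1meas)
      measurable_fst.aemeasurable).mp hμent'

  have hνent' : Integrable gν (π.map Prod.snd) := by rw [hπ2]; exact hνent
  have hIb : Integrable (fun z : E × E => gν z.2) π :=
    (integrable_map_measure (by rw [hπ2]; exact hg2meas)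
      measurable_snd.aemeasurable).mp hνent'

  have hμ2' : Integrable (fun x : E => ‖x‖ ^ 2) (π.map Prod.fst) := by rw [hπ1]; exact hμ2
  have hIfst : Integrable (fun z : E × E => ‖z.1‖ ^ 2) π :=
    (integrable_map_measure
      ((continuous_norm.pow 2).aestronglyMeasurable) measurable_fst.aemeasurable).mp hμ2'

  have hν2' : Integrable (fun x : E => ‖x‖ ^ 2) (π.map Prod.snd) := by rw [hπ2]; exact hν2
  have hIsnd : Integrable (fun z : E × E => ‖z.2‖ ^ 2) π :=
    (integrable_map_measure
      ((continuous_norm.pow 2).aestronglyMeasurable) measurable_snd.aemeasurable).mp hν2'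

  have hIcost : Integrable (fun z : E × E => ‖z.1 - z.2‖ ^ 2) π := by
    refine Integrable.mono' (((hIfst.const_mul 2).add (hIsnd.const_mul 2)))
      ((continuous_fst.sub continuous_snd).norm.pow 2).aestronglyMeasurable
      (ae_of_all _ fun z => ?_)
    have h := norm_sub_le z.1 z.2
    have h1 := norm_nonneg z.1
    have h2 := norm_nonneg z.2
    have h3 := norm_nonneg (z.1 - z.2)
    simp only [Pi.add_apply]
    rw [Real.norm_eq_abs, abs_of_nonneg (by positivity)]
    nlinarith [sq_nonneg (‖z.1‖ - ‖z.2‖), mul_self_le_mul_self h3 h]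
  have hI1 : Integrable (fun z : E × E => ‖z.1 - z.2‖ ^ 2 / (2 * T)) π := by
    simpa [div_eq_mul_inv] using hIcost.mul_const (2 * T)⁻¹
  have hIsum : Integrable (fun z : E × E => ‖z.1 - z.2‖ ^ 2 / (2 * T)
      + (gμ z.1
        + gν z.2
        + Real.log ((π.rnDeriv (μ.prod ν) z).toReal))) π :=
    hI1.add ((hIa.add hIb).add hπent)
  have hInt : Integrable (fun z => Real.log ((π.rnDeriv (heatRefMeasure d T) z).toReal)) π :=
    hIsum.congr hkey.symm
  refine ⟨hInt, ?_⟩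
  -- integral identities
  have hEa : ∫ z, gμ z.1 ∂π = ∫ x, gμ x ∂μ := by
    rw [← hπ1]
    exact (integral_map measurable_fst.aemeasurable (by rw [hπ1]; exact hg1meas)).symm
  have hEb : ∫ z, gν z.2 ∂π = ∫ y, gν y ∂ν := by
    rw [← hπ2]
    exact (integral_map measurable_snd.aemeasurable (by rw [hπ2]; exact hg2meas)).symm
  have hmain : ∫ z, Real.log ((π.rnDeriv (heatRefMeasure d T) z).toReal) ∂π
      = (∫ z, ‖z.1 - z.2‖ ^ 2 / (2 * T) ∂π)
        + ((∫ x, gμ x ∂μ)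
          + (∫ y, gν y ∂ν)
          + (∫ z, Real.log ((π.rnDeriv (μ.prod ν) z).toReal) ∂π)) := by
    have h4 : Integrable (fun z : E × E => gμ z.1 + gν z.2
        + Real.log ((π.rnDeriv (μ.prod ν) z).toReal)) π := (hIa.add hIb).add hπent
    have e1 : ∫ z, (‖z.1 - z.2‖ ^ 2 / (2 * T) + (gμ z.1 + gν z.2
          + Real.log ((π.rnDeriv (μ.prod ν) z).toReal))) ∂π
        = (∫ z, ‖z.1 - z.2‖ ^ 2 / (2 * T) ∂π) + ∫ z, (gμ z.1 + gν z.2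
          + Real.log ((π.rnDeriv (μ.prod ν) z).toReal)) ∂π := integral_add hI1 h4
    have e2 : ∫ z, (gμ z.1 + gν z.2 + Real.log ((π.rnDeriv (μ.prod ν) z).toReal)) ∂π
        = (∫ z, (gμ z.1 + gν z.2) ∂π)
          + ∫ z, Real.log ((π.rnDeriv (μ.prod ν) z).toReal) ∂π :=
      integral_add (hIa.add hIb) hπent
    have e3 : ∫ z, (gμ z.1 + gν z.2) ∂π = (∫ z, gμ z.1 ∂π) + ∫ z, gν z.2 ∂π :=
      integral_add hIa hIb
    rw [integral_congr_ae hkey, e1, e2, e3, hEa, hEb]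
  have hcost : ∫ z, ‖z.1 - z.2‖ ^ 2 / 2 ∂π
      = T * ∫ z, ‖z.1 - z.2‖ ^ 2 / (2 * T) ∂π := by
    rw [← integral_const_mul]
    refine integral_congr_ae (ae_of_all _ fun z => ?_)
    field_simp
  rw [hmain, hcost]
  ring
end

section
/- Let (M,d) be a metric space and 𝔪 a Borel measure on M that is positive and finite on every open ball. Suppose there exist N > 1 and κ < 0 such that the Bishop–Gromov inequality holds: for every x ∈ M and all 0 < r ≤ R, 𝔪(B_r(x)) · ∫₀^R sinh(t·√(−κ/(N−1)))^{N−1} dt ≥ 𝔪(B_R(x)) · ∫₀^r sinh(t·√(−κ/(N−1)))^{N−1} dt, where B_s(x) denotes the open ball of radius s centered at x. Then for every r > 0 and every Borel probability measure μ on M with finite first moment (i.e. ∫ d(x,z₀) dμ(x) < ∞ for some z₀ ∈ M), the function x ↦ max( log 𝔪(B_r(x)), 0 ) belongs to L¹(μ). -/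
open MeasureTheory

/-- The function `x ↦ 𝔪 (ball x r)` is lower semicontinuous. -/
lemma lowerSemicontinuous_measure_ball {M : Type*} [MetricSpace M] [MeasurableSpace M]
    (𝔪 : Measure M) (r : ℝ) :
    LowerSemicontinuous fun x => 𝔪 (Metric.ball x r) := by
  intro x c hc
  have hmono : Monotone fun n : ℕ => Metric.ball x (r - 1 / (n + 1)) := by
    intro m n hmn
    apply Metric.ball_subset_ball
    have h1 : (1 : ℝ) / (n + 1) ≤ 1 / (m + 1) := by
      apply one_div_le_one_div_of_le (by positivity)
      have : (m : ℝ) ≤ n := Nat.cast_le.2 hmn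
      linarith
    linarith
  have hU : Metric.ball x r = ⋃ n : ℕ, Metric.ball x (r - 1 / (n + 1)) := by
    ext y
    simp only [Metric.mem_ball, Set.mem_iUnion]
    constructor
    · intro hy
      obtain ⟨n, hn⟩ := exists_nat_one_div_lt (sub_pos.2 hy)
      exact ⟨n, by push_cast at hn ⊢; linarith⟩
    · rintro ⟨n, hn⟩
      have : (0 : ℝ) < 1 / (n + 1) := by positivity
      linarith
  have hc' : c < 𝔪 (Metric.ball x r) := hc
  rw [hU, hmono.measure_iUnion] at hc'
  obtain ⟨n, hn⟩ := lt_iSup_iff.1 hc'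
  have hpos : (0 : ℝ) < 1 / (n + 1) := by positivity
  filter_upwards [Metric.ball_mem_nhds x hpos] with y hy
  refine hn.trans_le (measure_mono ?_)
  intro z hz
  simp only [Metric.mem_ball] at hz hy ⊢
  have := dist_triangle z x y
  rw [dist_comm x y] at this
  calc dist z y ≤ dist z x + dist y x := this
    _ < r - 1 / (n + 1) + 1 / (n + 1) := add_lt_add hz hy
    _ = r := by ring

lemma sinh_le_exp' {a : ℝ} : Real.sinh a ≤ Real.exp a := by
  rw [Real.sinh_eq]
  nlinarith [Real.exp_pos a, Real.exp_pos (-a)]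

/-- Lemma "lemma:log:balls": on a metric measure space whose
measure is positive and finite on balls and satisfies the Bishop–Gromov
inequality of `CD(κ,N)` type with `κ < 0`, `N > 1`, the positive part of
`x ↦ log 𝔪(B_r(x))` is `μ`-integrable for every `r > 0` and every probability
measure `μ` with finite first moment. -/
theorem log_ball_pos_part_integrable
    {M : Type*} [MetricSpace M] [MeasurableSpace M] [BorelSpace M]
    (𝔪 : Measure M)
    (hball : ∀ (x : M) (s : ℝ), 0 < s →
      0 < 𝔪 (Metric.ball x s) ∧ 𝔪 (Metric.ball x s) < ⊤)
    (N κ : ℝ) (hN : 1 < N) (hκ : κ < 0)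
    (hBG : ∀ (x : M) (r R : ℝ), 0 < r → r ≤ R →
      (𝔪 (Metric.ball x R)).toReal *
          ∫ t in (0:ℝ)..r, Real.sinh (t * Real.sqrt (-κ / (N - 1))) ^ (N - 1)
        ≤ (𝔪 (Metric.ball x r)).toReal *
          ∫ t in (0:ℝ)..R, Real.sinh (t * Real.sqrt (-κ / (N - 1))) ^ (N - 1))
    (r : ℝ) (hr : 0 < r)
    (μ : Measure M) [IsProbabilityMeasure μ]
    (z₀ : M) (hμ1 : Integrable (fun x => dist x z₀) μ) :
    Integrable (fun x => max (Real.log (𝔪 (Metric.ball x r)).toReal) 0) μ := by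
  have hN1 : (0 : ℝ) < N - 1 := by linarith
  set c : ℝ := Real.sqrt (-κ / (N - 1)) with hc_def
  have hc : 0 < c := Real.sqrt_pos.2 (div_pos (neg_pos.2 hκ) hN1)
  set L : ℝ := (N - 1) * c with hL_def
  have hL : 0 < L := mul_pos hN1 hc
  set v : ℝ → ℝ := fun s => ∫ t in (0:ℝ)..s, Real.sinh (t * c) ^ (N - 1) with hv_def
  -- continuity of the integrand
  have hcont : Continuous fun t : ℝ => Real.sinh (t * c) ^ (N - 1) :=
    (Real.continuous_rpow_const hN1.le).comp
      (Real.continuous_sinh.comp (continuous_id.mul continuous_const))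
  have hvr : 0 < v r := by
    refine intervalIntegral.intervalIntegral_pos_of_pos_on
      (hcont.intervalIntegrable 0 r) (fun t ht => ?_) hr
    have : 0 < Real.sinh (t * c) := Real.sinh_pos_iff.2 (mul_pos ht.1 hc)
    exact Real.rpow_pos_of_pos this _
  -- upper bound on v R
  have hvR : ∀ R : ℝ, 0 < R → v R ≤ R * Real.exp (L * R) := by
    intro R hR
    have hbd : ∀ t ∈ Set.Icc (0:ℝ) R, Real.sinh (t * c) ^ (N - 1) ≤ Real.exp (L * R) := by
      intro t ht
      have h0 : 0 ≤ Real.sinh (t * c) :=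
        Real.sinh_nonneg_iff.2 (mul_nonneg ht.1 hc.le)
      have h1 : Real.sinh (t * c) ^ (N - 1) ≤ Real.exp (t * c) ^ (N - 1) :=
        Real.rpow_le_rpow h0 sinh_le_exp' hN1.le
      have h2 : Real.exp (t * c) ^ (N - 1) = Real.exp (t * c * (N - 1)) :=
        (Real.exp_mul _ _).symm
      have h3 : t * c * (N - 1) ≤ L * R := by
        rw [hL_def]
        have : t * c * (N - 1) = (N - 1) * c * t := by ring
        rw [this]
        exact mul_le_mul_of_nonneg_left ht.2 (by positivity)
      calc Real.sinh (t * c) ^ (N - 1) ≤ Real.exp (t * c * (N - 1)) := h2 ▸ h1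
        _ ≤ Real.exp (L * R) := Real.exp_le_exp.2 h3
    calc v R ≤ ∫ _ in (0:ℝ)..R, Real.exp (L * R) :=
          intervalIntegral.integral_mono_on hR.le (hcont.intervalIntegrable 0 R)
            (intervalIntegrable_const) hbd
      _ = R * Real.exp (L * R) := by
          rw [intervalIntegral.integral_const, smul_eq_mul, sub_zero]
  -- the key pointwise bound
  set C₀ : ℝ := (𝔪 (Metric.ball z₀ r)).toReal / v r with hC₀_def
  have hC₀ : 0 < C₀ := by
    apply div_pos _ hvr
    exact ENNReal.toReal_pos (hball z₀ r hr).1.ne' (hball z₀ r hr).2.ne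
  have key : ∀ x : M, Real.log (𝔪 (Metric.ball x r)).toReal
      ≤ |Real.log C₀| + (1 + L) * (dist x z₀ + r) := by
    intro x
    set R : ℝ := dist x z₀ + r with hR_def
    have hR : 0 < R := by positivity
    have hrR : r ≤ R := by have := dist_nonneg (x := x) (y := z₀); linarith
    -- step 1: ball x r ⊆ ball z₀ R
    have hsub : Metric.ball x r ⊆ Metric.ball z₀ R := by
      intro z hz
      simp only [Metric.mem_ball] at hz ⊢
      calc dist z z₀ ≤ dist z x + dist x z₀ := dist_triangle _ _ _
        _ < r + dist x z₀ := by linarith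
        _ = R := by rw [hR_def]; ring
    have h1 : (𝔪 (Metric.ball x r)).toReal ≤ (𝔪 (Metric.ball z₀ R)).toReal :=
      ENNReal.toReal_mono (hball z₀ R hR).2.ne (measure_mono hsub)
    -- step 2: Bishop–Gromov at z₀
    have h2 : (𝔪 (Metric.ball z₀ R)).toReal ≤ C₀ * v R := by
      have := hBG z₀ r R hr hrR
      rw [hC₀_def, div_mul_eq_mul_div, le_div_iff₀ hvr]
      exact this
    -- step 3
    have h3 : (𝔪 (Metric.ball x r)).toReal ≤ C₀ * (R * Real.exp (L * R)) := by
      calc (𝔪 (Metric.ball x r)).toReal ≤ C₀ * v R := h1.trans h2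
        _ ≤ C₀ * (R * Real.exp (L * R)) :=
            mul_le_mul_of_nonneg_left (hvR R hR) hC₀.le
    have hmx : 0 < (𝔪 (Metric.ball x r)).toReal :=
      ENNReal.toReal_pos (hball x r hr).1.ne' (hball x r hr).2.ne
    have h4 : Real.log (𝔪 (Metric.ball x r)).toReal
        ≤ Real.log (C₀ * (R * Real.exp (L * R))) :=
      (Real.log_le_log_iff hmx (by positivity)).2 h3
    have h5 : Real.log (C₀ * (R * Real.exp (L * R)))
        = Real.log C₀ + Real.log R + L * R := by
      rw [Real.log_mul hC₀.ne' (by positivity), Real.log_mul hR.ne'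
        (Real.exp_pos _).ne', Real.log_exp]
      ring
    have h6 : Real.log R ≤ R := by
      have := Real.log_le_sub_one_of_pos hR
      linarith
    have h7 : Real.log C₀ ≤ |Real.log C₀| := le_abs_self _
    calc Real.log (𝔪 (Metric.ball x r)).toReal
        ≤ Real.log C₀ + Real.log R + L * R := h4.trans_eq h5
      _ ≤ |Real.log C₀| + R + L * R := by linarith
      _ = |Real.log C₀| + (1 + L) * R := by ring
  -- the dominating function
  have hg : Integrable (fun x => (|Real.log C₀| + (1 + L) * r) + (1 + L) * dist x z₀) μ :=
    (integrable_const _).add (hμ1.const_mul _)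
  -- measurability
  have hmeas : AEStronglyMeasurable
      (fun x => max (Real.log (𝔪 (Metric.ball x r)).toReal) 0) μ := by
    have h0 : Measurable fun x : M => 𝔪 (Metric.ball x r) :=
      (lowerSemicontinuous_measure_ball 𝔪 r).measurable
    exact ((Real.measurable_log.comp h0.ennreal_toReal).max measurable_const)
      |>.aestronglyMeasurable
  apply Integrable.mono' hg hmeas
  filter_upwards with x
  rw [Real.norm_of_nonneg (le_max_right _ _)]
  have hkey := key x
  have h0 : (0:ℝ) ≤ |Real.log C₀| + (1 + L) * (dist x z₀ + r) := by
    have := dist_nonneg (x := x) (y := z₀)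
    have := abs_nonneg (Real.log C₀)
    nlinarith
  have : max (Real.log (𝔪 (Metric.ball x r)).toReal) 0
      ≤ |Real.log C₀| + (1 + L) * (dist x z₀ + r) := max_le hkey h0
  linarith [this]
end

section
/- Let (M,d) be a metric space and 𝔪 a Borel measure on M that is positive and finite on every open ball, and suppose there exist N > 1 and κ < 0 such that for every x ∈ M and all 0 < r ≤ R, 𝔪(B_r(x)) · ∫₀^R sinh(t·√(−κ/(N−1)))^{N−1} dt ≥ 𝔪(B_R(x)) · ∫₀^r sinh(t·√(−κ/(N−1)))^{N−1} dt. Then for every r > 0 and every x̄ ∈ M there exist constants C₂ > 0 and C₃ ≥ 0 (with C₃ depending only on κ, N, r, and C₂ additionally on x̄) such that 𝔪(B_r(x)) ≤ C₂ · e^{C₃ · d(x,x̄)} for all x ∈ M; in particular log 𝔪(B_r(x)) ≤ log C₂ + C₃·d(x,x̄). -/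
/-!
The Bishop–Gromov inequality at the centre `x̄` gives
`𝔪(B_R(x̄)) ≤ 𝔪(B_r(x̄)) · v(R) / v(r)` for `R ≥ r`, where `v(R) = ∫₀^R sinh(a t)^(N-1) dt`,
and `v(R) ≤ R · e^{a(N-1)R} ≤ e^{(a(N-1)+1)R}` grows at most exponentially.
Since `B_r(x) ⊆ B_{r + d(x,x̄)}(x̄)`, this bounds `𝔪(B_r(x))` by a constant times
`e^{(a(N-1)+1) d(x,x̄)}`; positivity of `𝔪(B_r(x))` then allows taking logarithms.
-/

open MeasureTheory Metric Real

lemma continuous_sinh_mul_rpow {a p : ℝ} (hp : 0 ≤ p) :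
    Continuous fun t : ℝ => sinh (t * a) ^ p :=
  (continuous_sinh.comp (continuous_id.mul continuous_const)).rpow_const fun _ => Or.inr hp

lemma integral_sinh_mul_rpow_pos {a p r : ℝ} (ha : 0 < a) (hp : 0 ≤ p) (hr : 0 < r) :
    0 < ∫ t in (0:ℝ)..r, sinh (t * a) ^ p :=
  intervalIntegral.intervalIntegral_pos_of_pos_on
    ((continuous_sinh_mul_rpow hp).intervalIntegrable 0 r)
    (fun _ ht => rpow_pos_of_pos (sinh_pos_iff.2 (mul_pos ht.1 ha)) _) hr

lemma sinh_lt_exp (x : ℝ) : sinh x < exp x := by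
  linarith [cosh_add_sinh x, cosh_pos x]

lemma integral_sinh_mul_rpow_le_exp {a p R : ℝ} (ha : 0 ≤ a) (hp : 0 ≤ p) (hR : 0 ≤ R) :
    ∫ t in (0:ℝ)..R, sinh (t * a) ^ p ≤ exp ((a * p + 1) * R) := by
  have hpointwise : ∀ t ∈ Set.Icc 0 R, sinh (t * a) ^ p ≤ exp (a * p * R) := by
    intro t ht
    have hsinh : sinh (t * a) ≤ exp (a * R) :=
      (sinh_lt_exp _).le.trans (exp_le_exp.2 (by nlinarith [ht.2]))
    calc sinh (t * a) ^ p ≤ exp (a * R) ^ p :=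
          rpow_le_rpow (sinh_nonneg_iff.2 (mul_nonneg ht.1 ha)) hsinh hp
      _ = exp (a * p * R) := by rw [← exp_mul]; ring_nf
  calc ∫ t in (0:ℝ)..R, sinh (t * a) ^ p
      ≤ ∫ _ in (0:ℝ)..R, exp (a * p * R) :=
        intervalIntegral.integral_mono_on hR ((continuous_sinh_mul_rpow hp).intervalIntegrable 0 R)
          intervalIntegrable_const hpointwise
    _ = R * exp (a * p * R) := by simp
    _ ≤ exp R * exp (a * p * R) := by gcongr; linarith [add_one_le_exp R]
    _ = exp ((a * p + 1) * R) := by rw [← exp_add]; ring_nf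

lemma measure_ball_le_mul_exp_dist {M : Type*} [PseudoMetricSpace M] [MeasurableSpace M]
    (μ : Measure M) {v : ℝ → ℝ} {c r : ℝ} {x₀ : M} (hfin : ∀ s, r ≤ s → μ (ball x₀ s) ≠ ⊤)
    (hcomp : ∀ R, r ≤ R → (μ (ball x₀ R)).toReal * v r ≤ (μ (ball x₀ r)).toReal * v R)
    (hv : 0 < v r) (hv_exp : ∀ R, r ≤ R → v R ≤ exp (c * R)) (x : M) :
    (μ (ball x r)).toReal ≤ (μ (ball x₀ r)).toReal / v r * exp (c * r) * exp (c * dist x x₀) := by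
  have hd : r ≤ r + dist x x₀ := le_add_of_nonneg_right dist_nonneg
  calc (μ (ball x r)).toReal ≤ (μ (ball x₀ (r + dist x x₀))).toReal :=
        ENNReal.toReal_mono (hfin _ hd) (measure_mono (ball_subset_ball' le_rfl))
    _ ≤ (μ (ball x₀ r)).toReal * v (r + dist x x₀) / v r := by
        rw [le_div_iff₀ hv]; exact hcomp _ hd
    _ ≤ (μ (ball x₀ r)).toReal * exp (c * (r + dist x x₀)) / v r := by
        gcongr; exact hv_exp _ hd
    _ = (μ (ball x₀ r)).toReal / v r * exp (c * r) * exp (c * dist x x₀) := by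
        rw [mul_add, exp_add]; ring

lemma log_le_log_add_of_le_mul_exp {A C c d : ℝ} (hA : 0 < A) (h : A ≤ C * exp (c * d)) :
    log A ≤ log C + c * d := by
  have hC : 0 < C := pos_of_mul_pos_left (hA.trans_le h) (exp_pos _).le
  rwa [log_le_iff_le_exp hA, exp_add, exp_log hC]

theorem ball_measure_exponential_growth_general
    {M : Type*} [MetricSpace M] [MeasurableSpace M]
    (𝔪 : Measure M)
    (hball : ∀ (x : M) (s : ℝ), 0 < s →
      0 < 𝔪 (Metric.ball x s) ∧ 𝔪 (Metric.ball x s) < ⊤)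
    (N κ : ℝ) (hN : 1 < N) (hκ : κ < 0)
    (hBG : ∀ (x : M) (r R : ℝ), 0 < r → r ≤ R →
      (𝔪 (Metric.ball x R)).toReal *
          ∫ t in (0:ℝ)..r, Real.sinh (t * Real.sqrt (-κ / (N - 1))) ^ (N - 1)
        ≤ (𝔪 (Metric.ball x r)).toReal *
          ∫ t in (0:ℝ)..R, Real.sinh (t * Real.sqrt (-κ / (N - 1))) ^ (N - 1))
    (r : ℝ) (hr : 0 < r) (xbar : M) :
    ∃ C₂ C₃ : ℝ, 0 < C₂ ∧ 0 ≤ C₃ ∧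
      ∀ x : M,
        (𝔪 (Metric.ball x r)).toReal ≤ C₂ * Real.exp (C₃ * dist x xbar) ∧
        Real.log (𝔪 (Metric.ball x r)).toReal ≤ Real.log C₂ + C₃ * dist x xbar := by
  set a := Real.sqrt (-κ / (N - 1))
  have hp : 0 ≤ N - 1 := by linarith
  have ha : 0 < a := Real.sqrt_pos.2 (div_pos (by linarith) (by linarith))
  set v : ℝ → ℝ := fun R => ∫ t in (0:ℝ)..R, sinh (t * a) ^ (N - 1)
  set c := a * (N - 1) + 1
  have hv : 0 < v r := integral_sinh_mul_rpow_pos ha hp hr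
  have hbound := measure_ball_le_mul_exp_dist 𝔪 (v := v) (c := c) (x₀ := xbar)
    (fun s hs => (hball xbar s (hr.trans_le hs)).2.ne) (fun R hR => hBG xbar r R hr hR) hv
    (fun R hR => integral_sinh_mul_rpow_le_exp ha.le hp (hr.le.trans hR))
  have hpos : ∀ x, 0 < (𝔪 (ball x r)).toReal := fun x =>
    ENNReal.toReal_pos (hball x r hr).1.ne' (hball x r hr).2.ne
  exact ⟨(𝔪 (ball xbar r)).toReal / v r * exp (c * r), c,
    by have := hpos xbar; positivity, by positivity,
    fun x => ⟨hbound x, log_le_log_add_of_le_mul_exp (hpos x) (hbound x)⟩⟩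

/-- eq. (remappo2): on a metric measure space whose measure is
positive and finite on balls and satisfies the Bishop–Gromov inequality of
`CD(κ,N)` type with `κ < 0`, `N > 1`, for every `r > 0` and every base point `x̄`
there are constants `C₂ > 0` and `C₃ ≥ 0` such that
`𝔪(B_r(x)) ≤ C₂ e^{C₃ d(x,x̄)}` for all `x`; in particular
`log 𝔪(B_r(x)) ≤ log C₂ + C₃ d(x,x̄)`. -/
theorem ball_measure_exponential_growth
    {M : Type*} [MetricSpace M] [MeasurableSpace M] [BorelSpace M]
    (𝔪 : Measure M)
    (hball : ∀ (x : M) (s : ℝ), 0 < s →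
      0 < 𝔪 (Metric.ball x s) ∧ 𝔪 (Metric.ball x s) < ⊤)
    (N κ : ℝ) (hN : 1 < N) (hκ : κ < 0)
    (hBG : ∀ (x : M) (r R : ℝ), 0 < r → r ≤ R →
      (𝔪 (Metric.ball x R)).toReal *
          ∫ t in (0:ℝ)..r, Real.sinh (t * Real.sqrt (-κ / (N - 1))) ^ (N - 1)
        ≤ (𝔪 (Metric.ball x r)).toReal *
          ∫ t in (0:ℝ)..R, Real.sinh (t * Real.sqrt (-κ / (N - 1))) ^ (N - 1))
    (r : ℝ) (hr : 0 < r) (xbar : M) :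
    ∃ C₂ C₃ : ℝ, 0 < C₂ ∧ 0 ≤ C₃ ∧
      ∀ x : M,
        (𝔪 (Metric.ball x r)).toReal ≤ C₂ * Real.exp (C₃ * dist x xbar) ∧
        Real.log (𝔪 (Metric.ball x r)).toReal ≤ Real.log C₂ + C₃ * dist x xbar :=
  ball_measure_exponential_growth_general 𝔪 hball N κ hN hκ hBG r hr xbar
end
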